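/- arXiv:1303.2730 — 5 statements merged into one kernel-verified Lean document; each statement's English description precedes it below -/
import Mathlib

section
/- Let G and H be weighted graphs on a finite vertex set V and let f : V → ℝ^m be any mapping of the vertices to real vectors such that Σ_{u,v∈V} H(u,v)·‖f(u) − f(v)‖₁ > 0. Then there exists a cut S ⊆ V with Σ_{u,v} H(u,v)·|1_S(u) − 1_S(v)| > 0 such that (Σ_{u,v} G(u,v)·|1_S(u) − 1_S(v)|) / (Σ_{u,v} H(u,v)·|1_S(u) − 1_S(v)|) ≤ (Σ_{u,v} G(u,v)·‖f(u) − f(v)‖₁) / (Σ_{u,v} H(u,v)·‖f(u) − f(v)‖₁). -/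
/-- Weight of the edges of `G` crossing the cut `(S, V \ S)` (over ordered pairs). -/
noncomputable def cutval {V : Type*} [Fintype V] [DecidableEq V] (G : V → V → ℝ) (S : Finset V) : ℝ :=
  ∑ u, ∑ v, G u v * |(if u ∈ S then (1 : ℝ) else 0) - (if v ∈ S then (1 : ℝ) else 0)|

/-- The ℓ₁ norm of a vector in `ℝ^m`. -/
noncomputable def l1norm {m : ℕ} (x : Fin m → ℝ) : ℝ := ∑ i, |x i|

/-!
Let `λ` be the least sparsity `cutval G S / cutval H S` over the cuts with `cutval H S > 0`.
Then `W = G - λ H` is nonnegative on every cut, and it suffices to show that `W` is then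
nonnegative on every line metric `|g u - g v|`, hence on every ℓ₁ metric (a sum of line metrics).
For a line metric this goes by induction on the set of values of `g`: if `a` is the largest value
and `b` the next one, truncating `g` at `b` splits `|g u - g v|` into the line metric of `min g b`,
which takes one value fewer, and `(a - b)` times the metric of the cut `{g = a}`.
-/

open Finset

lemma abs_sub_eq_abs_min_sub_min_add_abs_max_sub_max (x y t : ℝ) :
    |x - y| = |min x t - min y t| + |max x t - max y t| := by
  rcases le_total x t with hx | hx <;> rcases le_total y t with hy | hy <;>
    simp only [min_eq_left, min_eq_right, max_eq_left, max_eq_right, hx, hy] <;> grind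

lemma sum_mul_abs_sub_split {V : Type*} [Fintype V] (W : V → V → ℝ) (g : V → ℝ) (t : ℝ) :
    ∑ u, ∑ v, W u v * |g u - g v| =
      ∑ u, ∑ v, W u v * |min (g u) t - min (g v) t| +
        ∑ u, ∑ v, W u v * |max (g u) t - max (g v) t| := by
  simp only [← sum_add_distrib, ← mul_add, ← abs_sub_eq_abs_min_sub_min_add_abs_max_sub_max]

section Cuts

variable {V : Type*} [Fintype V] [DecidableEq V]

lemma cutval_nonneg {G : V → V → ℝ} (hG : ∀ u v, 0 ≤ G u v) (S : Finset V) :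
    0 ≤ cutval G S :=
  sum_nonneg fun u _ => sum_nonneg fun v _ => mul_nonneg (hG u v) (abs_nonneg _)

lemma cutval_sub_mul (G H : V → V → ℝ) (r : ℝ) (S : Finset V) :
    cutval (fun u v => G u v - r * H u v) S = cutval G S - r * cutval H S := by
  simp only [cutval, sub_mul, sum_sub_distrib, mul_sum, mul_assoc]

lemma sum_mul_abs_sub_of_two_valued (W : V → V → ℝ) {g : V → ℝ} {a b : ℝ}
    (hg : ∀ x, g x = a ∨ g x = b) :
    ∑ u, ∑ v, W u v * |g u - g v| = |a - b| * cutval W {x | g x = a} := by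
  simp only [cutval, mul_sum]
  refine sum_congr rfl fun u _ => sum_congr rfl fun v _ => ?_
  simp only [mem_filter, mem_univ, true_and]
  rcases hg u with hu | hu <;> rcases hg v with hv | hv <;> rw [hu, hv] <;> split_ifs <;>
    simp_all [abs_sub_comm, mul_comm]

variable {W : V → V → ℝ}

lemma sum_mul_abs_sub_nonneg_of_forall_cutval_nonneg (hW : ∀ S, 0 ≤ cutval W S) (g : V → ℝ) :
    0 ≤ ∑ u, ∑ v, W u v * |g u - g v| := by
  suffices ∀ T : Finset ℝ, ∀ g : V → ℝ, (∀ x, g x ∈ T) → 0 ≤ ∑ u, ∑ v, W u v * |g u - g v| from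
    this _ g fun x => mem_image_of_mem g (mem_univ x)
  intro T
  induction T using Finset.induction_on_max with
  | empty =>
    intro g hg
    exact (sum_eq_zero fun u _ => absurd (hg u) (notMem_empty _)).ge
  | insert a s hlt ih =>
    intro g hg
    obtain rfl | hs := s.eq_empty_or_nonempty
    · have hconst : ∀ x, g x = a := by simpa using hg
      simp [hconst]
    set b := s.max' hs
    have hb : b < a := hlt b (s.max'_mem hs)
    have hg' : ∀ x, g x = a ∨ g x ≤ b := fun x =>
      (mem_insert.1 (hg x)).imp_right (s.le_max' _)
    rw [sum_mul_abs_sub_split W g b]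
    refine add_nonneg (ih _ fun x => ?_) ?_
    · rcases hg' x with hx | hx
      · simpa [hx, hb.le] using s.max'_mem hs
      · simpa [min_eq_left hx] using (mem_insert.1 (hg x)).resolve_left (by linarith)
    · rw [sum_mul_abs_sub_of_two_valued W (a := a) (b := b) fun x => ?_]
      · exact mul_nonneg (abs_nonneg _) (hW _)
      · rcases hg' x with hx | hx
        · simp [hx, hb.le]
        · simp [hx]

lemma sum_mul_l1norm_nonneg_of_forall_cutval_nonneg (hW : ∀ S, 0 ≤ cutval W S) {m : ℕ}
    (f : V → Fin m → ℝ) : 0 ≤ ∑ u, ∑ v, W u v * l1norm (f u - f v) := by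
  have hsplit : ∑ u, ∑ v, W u v * l1norm (f u - f v) =
      ∑ i, ∑ u, ∑ v, W u v * |f u i - f v i| := by
    simp only [l1norm, Pi.sub_apply, mul_sum]
    conv_rhs => rw [sum_comm]
    exact sum_congr rfl fun u _ => sum_comm
  rw [hsplit]
  exact sum_nonneg fun i _ => sum_mul_abs_sub_nonneg_of_forall_cutval_nonneg hW _

lemma mul_sum_mul_l1norm_le_of_forall_mul_cutval_le {G H : V → V → ℝ} {r : ℝ}
    (hcut : ∀ S, r * cutval H S ≤ cutval G S) {m : ℕ} (f : V → Fin m → ℝ) :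
    r * ∑ u, ∑ v, H u v * l1norm (f u - f v) ≤ ∑ u, ∑ v, G u v * l1norm (f u - f v) := by
  have := sum_mul_l1norm_nonneg_of_forall_cutval_nonneg
    (W := fun u v => G u v - r * H u v) (fun S => by rw [cutval_sub_mul]; linarith [hcut S]) f
  simp only [sub_mul, sum_sub_distrib, mul_assoc, ← mul_sum] at this
  linarith

end Cuts

theorem round_l1_embedding_general {V : Type*} [Fintype V] [DecidableEq V] (G H : V → V → ℝ)
    (hGnonneg : ∀ u v, 0 ≤ G u v)
    (hHnonneg : ∀ u v, 0 ≤ H u v)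
    (m : ℕ) (f : V → Fin m → ℝ)
    (hpos : 0 < ∑ u, ∑ v, H u v * l1norm (f u - f v)) :
    ∃ S : Finset V, 0 < cutval H S ∧
      cutval G S / cutval H S ≤
        (∑ u, ∑ v, G u v * l1norm (f u - f v)) / (∑ u, ∑ v, H u v * l1norm (f u - f v)) := by
  have hcut : ∃ S, 0 < cutval H S := by
    -- otherwise `1 • H` is dominated by the zero graph on cuts, hence on the ℓ₁ metric of `f`
    by_contra! hzero
    have := mul_sum_mul_l1norm_le_of_forall_mul_cutval_le (G := fun _ _ => 0) (r := 1)
      (fun S => by simpa [cutval] using hzero S) f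
    simp only [zero_mul, sum_const_zero, one_mul] at this
    linarith
  obtain ⟨S, hS, hmin⟩ := (univ.filter fun S => 0 < cutval H S).exists_min_image
    (fun S => cutval G S / cutval H S) (by simpa [Finset.Nonempty] using hcut)
  rw [mem_filter] at hS
  refine ⟨S, hS.2, ?_⟩
  rw [le_div_iff₀ hpos]
  refine mul_sum_mul_l1norm_le_of_forall_mul_cutval_le (fun T => ?_) f
  rcases (cutval_nonneg hHnonneg T).eq_or_lt with hT | hT
  · rw [← hT, mul_zero]
    exact cutval_nonneg hGnonneg T
  · exact (le_div_iff₀ hT).1 (hmin T (by simpa using hT))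

/-- Rounding an ℓ₁ embedding to a cut: from any map `f : V → ℝ^m` one can extract a cut whose
sparsity is at most the ratio of the ℓ₁ averages. -/
theorem round_l1_embedding {V : Type*} [Fintype V] [DecidableEq V] (G H : V → V → ℝ)
    (hGsymm : ∀ u v, G u v = G v u) (hGnonneg : ∀ u v, 0 ≤ G u v)
    (hHsymm : ∀ u v, H u v = H v u) (hHnonneg : ∀ u v, 0 ≤ H u v)
    (m : ℕ) (f : V → Fin m → ℝ)
    (hpos : 0 < ∑ u, ∑ v, H u v * l1norm (f u - f v)) :
    ∃ S : Finset V, 0 < cutval H S ∧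
      cutval G S / cutval H S ≤
        (∑ u, ∑ v, G u v * l1norm (f u - f v)) / (∑ u, ∑ v, H u v * l1norm (f u - f v)) :=
  round_l1_embedding_general G H hGnonneg hHnonneg m f hpos
end

section
/- There is a universal constant C such that for every n ≥ 2, every N ≥ 1, and every n-point subset X of ℝ^N, there exist m ≤ C·log n and a mapping f : X → ℝ^m such that for all x, y ∈ X: ‖f(x) − f(y)‖₁ ≤ ‖x − y‖₂ ≤ 2·‖f(x) − f(y)‖₁. -/
/-!
Multiply by a matrix of independent uniform signs with `m ≍ log n` rows, rescaled by `1 / m`.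
For a unit vector `u` and a random sign vector `ε`, Khintchine's inequality (from the second and
fourth moments of `⟨ε, u⟩`) puts `E |⟨ε, u⟩|` between `23/40` and `1`, and symmetrisation against
an independent copy shows that `|⟨ε, u⟩| - E |⟨ε, u⟩|` is subgaussian. Hence the ℓ₁ norm of the
image of `u` is within `m/20` of its mean except with probability `2 exp (-m/1600)`, and a union
bound over the at most `n²` differences `x - y` leaves one sign matrix that distorts all of them
by a factor at most `(21/20) / (21/40) = 2`. Probabilities are written as counts of sign patterns.
-/

open Finset Real Matrix
open scoped Pointwise

lemma l1norm_smul {m : ℕ} (c : ℝ) (x : Fin m → ℝ) : l1norm (c • x) = |c| * l1norm x := by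
  simp only [l1norm, Pi.smul_apply, smul_eq_mul, abs_mul, mul_sum]

section

variable {β : Type*} [Fintype β]

lemma sum_sum_cosh_mul_sub (Z : β → ℝ) (t : ℝ) :
    ∑ b, ∑ b', cosh (t * (Z b - Z b')) = ∑ b, ∑ b', exp (t * (Z b - Z b')) := by
  have hswap :
      ∑ b, ∑ b', exp (-(t * (Z b - Z b'))) = ∑ b, ∑ b', exp (t * (Z b - Z b')) := by
    rw [sum_comm]
    simp only [neg_mul_eq_mul_neg, neg_sub]
  simp only [cosh_eq, ← sum_div, sum_add_distrib, hswap]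
  ring

-- By the symmetry `b ↔ b'` the exponentials may be replaced by `cosh`, which is monotone in `|·|`.
lemma sum_sum_exp_mul_sub_le (X Y : β → ℝ) (hXY : ∀ b b', |X b - X b'| ≤ |Y b - Y b'|)
    (t : ℝ) :
    ∑ b, ∑ b', exp (t * (X b - X b')) ≤ (∑ b, exp (t * Y b)) * ∑ b, exp (-t * Y b) :=
  calc ∑ b, ∑ b', exp (t * (X b - X b'))
      = ∑ b, ∑ b', cosh (t * (X b - X b')) := (sum_sum_cosh_mul_sub X t).symm
    _ ≤ ∑ b, ∑ b', cosh (t * (Y b - Y b')) := by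
        gcongr with b _ b' _
        rw [cosh_le_cosh, abs_mul, abs_mul]
        exact mul_le_mul_of_nonneg_left (hXY b b') (abs_nonneg t)
    _ = (∑ b, exp (t * Y b)) * ∑ b, exp (-t * Y b) := by
        rw [sum_sum_cosh_mul_sub, sum_mul_sum]
        simp only [← exp_add]
        ring_nf

lemma sum_exp_mul_sub_mean_le [Nonempty β] (X : β → ℝ) (t : ℝ) :
    ∑ b, exp (t * (X b - (∑ b', X b') / Fintype.card β)) ≤
      (Fintype.card β : ℝ)⁻¹ * ∑ b, ∑ b', exp (t * (X b - X b')) := by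
  have hK : (0 : ℝ) < Fintype.card β := by exact_mod_cast Fintype.card_pos
  rw [mul_sum]
  gcongr with b _
  have hw : ∑ _b' : β, (Fintype.card β : ℝ)⁻¹ = 1 := by
    rw [sum_const, card_univ, nsmul_eq_mul, mul_inv_cancel₀ hK.ne']
  have jensen := convexOn_exp.map_sum_le (t := univ) (w := fun _ => (Fintype.card β : ℝ)⁻¹)
    (p := fun b' => t * (X b - X b')) (fun _ _ => by positivity) hw (fun _ _ => Set.mem_univ _)
  simp only [smul_eq_mul, ← mul_sum] at jensen
  convert jensen using 2
  rw [sum_sub_distrib, sum_const, card_univ, nsmul_eq_mul]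
  field_simp

lemma card_filter_le_mul_exp_le (F : β → ℝ) (a : ℝ) {t : ℝ} (ht : 0 ≤ t) :
    #{b | a ≤ F b} * exp (t * a) ≤ ∑ b, exp (t * F b) := by
  classical
  calc #{b | a ≤ F b} * exp (t * a) = ∑ b ∈ {b | a ≤ F b}, exp (t * a) := by
        rw [sum_const, nsmul_eq_mul]
    _ ≤ ∑ b ∈ {b | a ≤ F b}, exp (t * F b) := by
        gcongr with b hb
        exact (mem_filter.mp hb).2
    _ ≤ ∑ b, exp (t * F b) := sum_le_univ_sum_of_nonneg fun _ => (exp_pos _).le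

end

namespace SignSketch

variable {N : ℕ}

def signVec (r : Fin N → Bool) : Fin N → ℝ := fun j => if r j then 1 else -1

lemma sum_signVec_dotProduct_succ (G : ℝ → ℝ) (u : Fin (N + 1) → ℝ) :
    ∑ r : Fin (N + 1) → Bool, G (signVec r ⬝ᵥ u) =
      ∑ r : Fin N → Bool,
        (G (u 0 + signVec r ⬝ᵥ Fin.tail u) + G (-u 0 + signVec r ⬝ᵥ Fin.tail u)) := by
  rw [← (Fin.consEquiv fun _ => Bool).sum_comp, Fintype.sum_prod_type, Fintype.sum_bool,
    ← sum_add_distrib]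
  simp [signVec, dotProduct, Fin.sum_univ_succ, Fin.tail, Fin.consEquiv]

lemma sum_sq_succ (u : Fin (N + 1) → ℝ) : ∑ j, u j ^ 2 = u 0 ^ 2 + ∑ j, Fin.tail u j ^ 2 :=
  Fin.sum_univ_succ _

lemma card_bool_fun : (Fintype.card (Fin N → Bool) : ℝ) = 2 ^ N := by simp

lemma sum_signVec_dotProduct_sq (u : Fin N → ℝ) :
    ∑ r : Fin N → Bool, (signVec r ⬝ᵥ u) ^ 2 = 2 ^ N * ∑ j, u j ^ 2 := by
  induction N with
  | zero => simp
  | succ N ih =>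
    have h (a s : ℝ) : (a + s) ^ 2 + (-a + s) ^ 2 = 2 * a ^ 2 + 2 * s ^ 2 := by ring
    simp only [sum_signVec_dotProduct_succ (· ^ 2), h, sum_add_distrib, ← mul_sum, ih,
      sum_const, card_univ, card_bool_fun, nsmul_eq_mul, sum_sq_succ]
    ring

lemma sum_signVec_dotProduct_pow_four_le (u : Fin N → ℝ) :
    ∑ r : Fin N → Bool, (signVec r ⬝ᵥ u) ^ 4 ≤ 3 * 2 ^ N * (∑ j, u j ^ 2) ^ 2 := by
  induction N with
  | zero => simp
  | succ N ih =>
    have h (a s : ℝ) :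
        (a + s) ^ 4 + (-a + s) ^ 4 = 2 * a ^ 4 + 12 * a ^ 2 * s ^ 2 + 2 * s ^ 4 := by
      ring
    simp only [sum_signVec_dotProduct_succ (· ^ 4), h, sum_add_distrib, ← mul_sum,
      sum_signVec_dotProduct_sq, sum_const, card_univ, card_bool_fun, nsmul_eq_mul, sum_sq_succ]
    have hK : (0 : ℝ) ≤ 2 ^ N := by positivity
    have hQ : 0 ≤ ∑ j, Fin.tail u j ^ 2 := sum_nonneg fun _ _ => sq_nonneg _
    rw [pow_succ (2 : ℝ) N]
    nlinarith [ih (Fin.tail u), mul_nonneg hK (pow_nonneg (sq_nonneg (u 0)) 2),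
      mul_nonneg hK (mul_nonneg (sq_nonneg (u 0)) hQ)]

lemma sum_exp_signVec_dotProduct_le (u : Fin N → ℝ) (t : ℝ) :
    ∑ r : Fin N → Bool, exp (t * (signVec r ⬝ᵥ u)) ≤
      2 ^ N * exp (t ^ 2 * (∑ j, u j ^ 2) / 2) := by
  induction N with
  | zero => simp
  | succ N ih =>
    have h (a s : ℝ) :
        exp (t * (a + s)) + exp (t * (-a + s)) = 2 * cosh (t * a) * exp (t * s) := by
      simp only [cosh_eq, mul_add, mul_neg, exp_add, exp_neg]
      ring
    simp only [sum_signVec_dotProduct_succ (fun s => exp (t * s)), h, ← mul_sum]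
    calc 2 * cosh (t * u 0) * ∑ r : Fin N → Bool, exp (t * (signVec r ⬝ᵥ Fin.tail u))
        ≤ 2 * exp ((t * u 0) ^ 2 / 2) *
            (2 ^ N * exp (t ^ 2 * (∑ j, Fin.tail u j ^ 2) / 2)) := by
          gcongr
          · exact cosh_le_exp_half_sq _
          · exact ih _
      _ = 2 ^ (N + 1) * exp (t ^ 2 * (∑ j, u j ^ 2) / 2) := by
          rw [sum_sq_succ, pow_succ (2 : ℝ) N, mul_mul_mul_comm, ← exp_add]
          ring_nf

noncomputable def meanAbs (u : Fin N → ℝ) : ℝ :=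
  (∑ r : Fin N → Bool, |signVec r ⬝ᵥ u|) / 2 ^ N

lemma meanAbs_le_one {u : Fin N → ℝ} (hu : ∑ j, u j ^ 2 = 1) : meanAbs u ≤ 1 := by
  have hcs := sq_sum_le_card_mul_sum_sq (s := univ)
    (f := fun r : Fin N → Bool => |signVec r ⬝ᵥ u|)
  simp only [sq_abs, sum_signVec_dotProduct_sq, hu, card_univ, card_bool_fun, mul_one] at hcs
  have hK : (0 : ℝ) < 2 ^ N := by positivity
  rw [meanAbs, div_le_one hK]
  nlinarith [sum_nonneg fun r (_ : r ∈ univ) => abs_nonneg (signVec r ⬝ᵥ u)]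

-- For `x = |s|`, `x - 7/8 x² + x⁴/10 = x ((x - a)² (x + 2a) / 10 + (small positive terms))`
-- with `a = 427/250 ≈ √(35/12)`; and `7/8 - 3/10 = 23/40` is close to Khintchine's `1/√3`.
lemma quartic_le_abs (s : ℝ) : 7 / 8 * s ^ 2 - s ^ 4 / 10 ≤ |s| := by
  have key : 0 ≤ |s| * ((|s| - 427 / 250) ^ 2 * (|s| + 427 / 125)) :=
    mul_nonneg (abs_nonneg s) (mul_nonneg (sq_nonneg _) (by positivity))
  rw [← sq_abs s, ← (by decide : Even 4).pow_abs s]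
  nlinarith [abs_nonneg s, sq_nonneg |s|]

lemma le_meanAbs {u : Fin N → ℝ} (hu : ∑ j, u j ^ 2 = 1) : 23 / 40 ≤ meanAbs u := by
  have hpoly := sum_le_sum fun r (_ : r ∈ univ) => quartic_le_abs (signVec r ⬝ᵥ u)
  rw [sum_sub_distrib, ← mul_sum, ← sum_div, sum_signVec_dotProduct_sq, hu] at hpoly
  have h4 := sum_signVec_dotProduct_pow_four_le u
  rw [hu] at h4
  rw [meanAbs, le_div_iff₀ (by positivity)]
  linarith

lemma sum_exp_mul_abs_sub_meanAbs_le {u : Fin N → ℝ} (hu : ∑ j, u j ^ 2 = 1) (t : ℝ) :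
    ∑ r : Fin N → Bool, exp (t * (|signVec r ⬝ᵥ u| - meanAbs u)) ≤ 2 ^ N * exp (t ^ 2) := by
  have hmgf (t : ℝ) :
      ∑ r : Fin N → Bool, exp (t * (signVec r ⬝ᵥ u)) ≤ 2 ^ N * exp (t ^ 2 / 2) := by
    simpa [hu] using sum_exp_signVec_dotProduct_le u t
  calc ∑ r : Fin N → Bool, exp (t * (|signVec r ⬝ᵥ u| - meanAbs u))
      ≤ (2 ^ N)⁻¹ * ∑ r : Fin N → Bool, ∑ r',
          exp (t * (|signVec r ⬝ᵥ u| - |signVec r' ⬝ᵥ u|)) := by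
        simpa only [meanAbs, card_bool_fun] using
          sum_exp_mul_sub_mean_le (fun r : Fin N → Bool => |signVec r ⬝ᵥ u|) t
    _ ≤ (2 ^ N)⁻¹ * ((∑ r : Fin N → Bool, exp (t * (signVec r ⬝ᵥ u))) *
          ∑ r : Fin N → Bool, exp (-t * (signVec r ⬝ᵥ u))) := by
        gcongr
        exact sum_sum_exp_mul_sub_le _ _ (fun r r' => abs_abs_sub_abs_le_abs_sub _ _) t
    _ ≤ (2 ^ N)⁻¹ * ((2 ^ N * exp (t ^ 2 / 2)) * (2 ^ N * exp ((-t) ^ 2 / 2))) := by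
        gcongr
        exacts [hmgf t, hmgf (-t)]
    _ = 2 ^ N * exp (t ^ 2) := by
        rw [neg_sq, mul_mul_mul_comm, ← exp_add, add_halves]
        field_simp

def signMatrix {m : ℕ} (ω : Fin m → Fin N → Bool) : Matrix (Fin m) (Fin N) ℝ :=
  Matrix.of fun i => signVec (ω i)

lemma l1norm_signMatrix_mulVec {m : ℕ} (ω : Fin m → Fin N → Bool) (u : Fin N → ℝ) :
    l1norm (signMatrix ω *ᵥ u) = ∑ i, |signVec (ω i) ⬝ᵥ u| := rfl

lemma sum_exp_mul_l1norm_signMatrix_mulVec_sub_le {m : ℕ} {u : Fin N → ℝ}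
    (hu : ∑ j, u j ^ 2 = 1) (t : ℝ) :
    ∑ ω : Fin m → Fin N → Bool, exp (t * (l1norm (signMatrix ω *ᵥ u) - m * meanAbs u)) ≤
      (2 ^ N) ^ m * exp (m * t ^ 2) := by
  have hprod (ω : Fin m → Fin N → Bool) :
      exp (t * (l1norm (signMatrix ω *ᵥ u) - m * meanAbs u)) =
        ∏ i, exp (t * (|signVec (ω i) ⬝ᵥ u| - meanAbs u)) := by
    rw [← exp_sum, ← mul_sum, sum_sub_distrib, sum_const, card_univ, Fintype.card_fin,
      nsmul_eq_mul, l1norm_signMatrix_mulVec]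
  simp_rw [hprod]
  rw [← Fintype.prod_sum fun (_ : Fin m) (r : Fin N → Bool) =>
      exp (t * (|signVec r ⬝ᵥ u| - meanAbs u)),
    prod_const, card_univ, Fintype.card_fin, exp_nat_mul, ← mul_pow]
  gcongr
  exact sum_exp_mul_abs_sub_meanAbs_le hu t

lemma card_le_abs_l1norm_signMatrix_mulVec_sub_le {m : ℕ} {u : Fin N → ℝ}
    (hu : ∑ j, u j ^ 2 = 1) {δ : ℝ} (hδ : 0 ≤ δ) :
    #{ω : Fin m → Fin N → Bool | δ * m ≤ |l1norm (signMatrix ω *ᵥ u) - m * meanAbs u|} ≤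
      2 * (2 ^ N) ^ m * exp (-(m * δ ^ 2 / 4)) := by
  classical
  set D := fun ω : Fin m → Fin N → Bool => l1norm (signMatrix ω *ᵥ u) - m * meanAbs u
  have one_sided (σ : ℝ) (hσ : σ ^ 2 = 1) :
      (#{ω | δ * m ≤ σ * D ω} : ℝ) ≤ (2 ^ N) ^ m * exp (-(m * δ ^ 2 / 4)) := by
    have hexp : (2 ^ N) ^ m * exp (m * (δ / 2 * σ) ^ 2) =
        (2 ^ N) ^ m * exp (-(m * δ ^ 2 / 4)) * exp (δ / 2 * (δ * m)) := by
      rw [mul_assoc, ← exp_add, mul_pow, hσ]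
      ring_nf
    have hmarkov :=
      (card_filter_le_mul_exp_le (fun ω => σ * D ω) (δ * m) (t := δ / 2) (by positivity)).trans
        (by simpa only [← mul_assoc] using
          sum_exp_mul_l1norm_signMatrix_mulVec_sub_le (m := m) hu (δ / 2 * σ))
    rw [hexp] at hmarkov
    exact le_of_mul_le_mul_right hmarkov (exp_pos _)
  have hsplit : ({ω | δ * m ≤ |D ω|} : Finset (Fin m → Fin N → Bool)) ⊆
      ({ω | δ * m ≤ 1 * D ω} : Finset _) ∪ ({ω | δ * m ≤ -1 * D ω} : Finset _) := by
    intro ω hω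
    simp only [mem_filter, mem_union, mem_univ, true_and, one_mul, neg_one_mul] at hω ⊢
    exact le_abs.mp hω
  calc (#{ω | δ * m ≤ |D ω|} : ℝ) ≤ #{ω | δ * m ≤ 1 * D ω} + #{ω | δ * m ≤ -1 * D ω} := by
        exact_mod_cast (card_le_card hsplit).trans (card_union_le _ _)
    _ ≤ 2 * (2 ^ N) ^ m * exp (-(m * δ ^ 2 / 4)) := by
        linarith [one_sided 1 (by norm_num), one_sided (-1) (by norm_num)]

-- `21/40 = 23/40 - 1/20` and `21/20 = 1 + 1/20`: the Khintchine bounds on `meanAbs`, widened by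
-- the deviation `1/20` allowed per row.
def SketchPreserves {m : ℕ} (ω : Fin m → Fin N → Bool) (v : EuclideanSpace ℝ (Fin N)) : Prop :=
  21 / 40 * m * ‖v‖ ≤ l1norm (signMatrix ω *ᵥ v) ∧ l1norm (signMatrix ω *ᵥ v) ≤ 21 / 20 * m * ‖v‖

open Classical in
lemma card_not_sketchPreserves_le {m : ℕ} (v : EuclideanSpace ℝ (Fin N)) :
    #{ω : Fin m → Fin N → Bool | ¬SketchPreserves ω v} ≤
      2 * (2 ^ N) ^ m * exp (-(m / 1600)) := by
  by_cases hv : v = 0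
  · have : ∀ ω : Fin m → Fin N → Bool, SketchPreserves ω v := by
      simp [SketchPreserves, hv, l1norm]
    rw [filter_eq_empty_iff.mpr fun ω _ => not_not.mpr (this ω), card_empty, Nat.cast_zero]
    positivity
  have hv' : 0 < ‖v‖ := norm_pos_iff.mpr hv
  set u : Fin N → ℝ := ‖v‖⁻¹ • ⇑v
  have hu : ∑ j, u j ^ 2 = 1 := by
    simp only [u, Pi.smul_apply, smul_eq_mul, mul_pow, ← mul_sum,
      ← EuclideanSpace.real_norm_sq_eq]
    field_simp
  have hscale (ω : Fin m → Fin N → Bool) :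
      l1norm (signMatrix ω *ᵥ v) = ‖v‖ * l1norm (signMatrix ω *ᵥ u) := by
    rw [mulVec_smul, l1norm_smul, abs_inv, abs_norm, ← mul_assoc, mul_inv_cancel₀ hv'.ne',
      one_mul]
  have hsub : ({ω | ¬SketchPreserves ω v} : Finset (Fin m → Fin N → Bool)) ⊆
      ({ω | 1 / 20 * m ≤ |l1norm (signMatrix ω *ᵥ u) - m * meanAbs u|} : Finset _) := by
    intro ω
    simp only [mem_filter, mem_univ, true_and, SketchPreserves, hscale]
    intro hbad
    by_contra! hgood
    obtain ⟨hlo, hhi⟩ := abs_lt.mp hgood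
    have := le_meanAbs hu
    have := meanAbs_le_one hu
    have hm : (0 : ℝ) ≤ m := m.cast_nonneg
    refine hbad ⟨?_, ?_⟩ <;> rw [mul_comm ‖v‖] <;> gcongr <;> nlinarith
  calc (#{ω | ¬SketchPreserves ω v} : ℝ)
      ≤ #{ω : Fin m → Fin N → Bool |
          1 / 20 * m ≤ |l1norm (signMatrix ω *ᵥ u) - m * meanAbs u|} := by
        exact_mod_cast card_le_card hsub
    _ ≤ 2 * (2 ^ N) ^ m * exp (-(m * (1 / 20) ^ 2 / 4)) :=
        card_le_abs_l1norm_signMatrix_mulVec_sub_le hu (by norm_num)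
    _ = 2 * (2 ^ N) ^ m * exp (-(m / 1600)) := by ring_nf

lemma exists_forall_sketchPreserves {m : ℕ} (V : Finset (EuclideanSpace ℝ (Fin N)))
    (hV : 2 * #V < exp (m / 1600)) :
    ∃ ω : Fin m → Fin N → Bool, ∀ v ∈ V, SketchPreserves ω v := by
  classical
  by_contra! h
  have hcover : (univ : Finset (Fin m → Fin N → Bool)) ⊆
      V.biUnion fun v => {ω | ¬SketchPreserves ω v} := by
    intro ω _
    obtain ⟨v, hv, hω⟩ := h ω
    exact mem_biUnion.mpr ⟨v, hv, mem_filter.mpr ⟨mem_univ ω, hω⟩⟩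
  have hcount : ((2 : ℝ) ^ N) ^ m ≤ #V * (2 * (2 ^ N) ^ m * exp (-(m / 1600))) :=
    calc ((2 : ℝ) ^ N) ^ m = #(univ : Finset (Fin m → Fin N → Bool)) := by simp
      _ ≤ ∑ v ∈ V, (#{ω : Fin m → Fin N → Bool | ¬SketchPreserves ω v} : ℝ) := by
        exact_mod_cast (card_le_card hcover).trans card_biUnion_le
      _ ≤ #V * (2 * (2 ^ N) ^ m * exp (-(m / 1600))) := by
        rw [← nsmul_eq_mul]
        exact sum_le_card_nsmul _ _ _ fun v _ => by convert card_not_sketchPreserves_le v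
  rw [exp_neg, ← div_eq_mul_inv, mul_div_assoc', le_div_iff₀ (exp_pos _)] at hcount
  have hΩ : (0 : ℝ) < (2 ^ N) ^ m := by positivity
  nlinarith

lemma exists_nat_pos_le_mul_log_and_lt_exp {n : ℕ} (hn : 2 ≤ n) :
    ∃ m : ℕ, 0 < m ∧ (m : ℝ) ≤ 6402 * log n ∧ 2 * (n : ℝ) ^ 2 < exp (m / 1600) := by
  have hn' : (2 : ℝ) ≤ n := by exact_mod_cast hn
  have hlog : 1 / 2 < log n :=
    (log_two_gt_d9.trans_le' (by norm_num)).trans_le (log_le_log (by norm_num) hn')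
  refine ⟨⌈6400 * log n⌉₊, Nat.ceil_pos.mpr (by positivity), ?_, ?_⟩
  · linarith [Nat.ceil_lt_add_one (show 0 ≤ 6400 * log n by positivity)]
  · have h4 : (4 : ℝ) ≤ n ^ 2 := by nlinarith
    calc 2 * (n : ℝ) ^ 2 < (n : ℝ) ^ 4 := by
          nlinarith [mul_le_mul_of_nonneg_right h4 (sq_nonneg (n : ℝ))]
      _ = exp (4 * log n) := by
        rw [show (4 : ℝ) * log n = log (n ^ 4) by rw [log_pow]; norm_num,
          exp_log (by positivity)]
      _ ≤ exp (⌈6400 * log n⌉₊ / 1600) := by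
        gcongr
        linarith [Nat.le_ceil (6400 * log n)]

end SignSketch

/-- Every `n`-point subset of `ℓ₂^N` embeds into `ℓ₁^{O(log n)}` so that the ℓ₁ distance
is within a factor 2 below the Euclidean distance: there is a universal constant `C` such
that for every `n ≥ 2`, `N ≥ 1` and `n`-point set `X ⊆ ℝ^N` there are `m ≤ C·log n` and
`f : X → ℝ^m` with `‖f x − f y‖₁ ≤ ‖x − y‖₂ ≤ 2‖f x − f y‖₁`. -/
theorem l2_into_l1_embedding :
    ∃ C : ℝ, 0 < C ∧ ∀ n N : ℕ, 2 ≤ n → 1 ≤ N →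
      ∀ X : Finset (EuclideanSpace ℝ (Fin N)), X.card = n →
        ∃ m : ℕ, (m : ℝ) ≤ C * Real.log n ∧
          ∃ f : EuclideanSpace ℝ (Fin N) → Fin m → ℝ,
            ∀ x ∈ X, ∀ y ∈ X,
              l1norm (f x - f y) ≤ ‖x - y‖ ∧ ‖x - y‖ ≤ 2 * l1norm (f x - f y) := by
  refine ⟨6402, by norm_num, fun n N hn _ X hX => ?_⟩
  obtain ⟨m, hm, hm_le, hm_exp⟩ := SignSketch.exists_nat_pos_le_mul_log_and_lt_exp hn
  have hdiff : 2 * (#(X - X) : ℝ) < exp (m / 1600) := by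
    have : (#(X - X) : ℝ) ≤ n ^ 2 := by rw [← hX, sq]; exact_mod_cast card_sub_le
    linarith
  obtain ⟨ω, hω⟩ := SignSketch.exists_forall_sketchPreserves (X - X) hdiff
  refine ⟨m, hm_le, fun x => (20 / (21 * m) : ℝ) • (SignSketch.signMatrix ω *ᵥ x),
    fun x hx y hy => ?_⟩
  obtain ⟨hlo, hhi⟩ := hω (x - y) (sub_mem_sub hx hy)
  have hm' : (0 : ℝ) < m := by exact_mod_cast hm
  rw [WithLp.ofLp_sub] at hlo hhi
  rw [← smul_sub, ← mulVec_sub, l1norm_smul, abs_of_pos (by positivity)]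
  constructor
  · rw [div_mul_eq_mul_div, div_le_iff₀ (by positivity)]
    linarith
  · rw [← mul_assoc, mul_div_assoc', div_mul_eq_mul_div, le_div_iff₀ (by positivity)]
    linarith
end

section
/- Let (G,H) be an instance of the nonuniform sparsest cut problem on a finite vertex set V where H is a rank-1 graph with H̄(u,v) = μ(u)·μ(v) for a probability distribution μ. Let {x_v}_{v∈V} be a feasible solution to the Goemans–Linial relaxation for (G,H) of cost ε. Suppose P_{u,v∼μ×μ}[ ‖x_u − x_v‖² ≥ 1/4 ] ≥ 1/2. Then there exists a cut S ⊆ V with H̄(S) > 0 and sparsity σ(G,H;S) ≤ 8√ε. -/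
open Finset

section khintchine

variable {ι : Type*} [DecidableEq ι]

noncomputable def glEps (T : Finset ι) (i : ι) : ℝ := if i ∈ T then 1 else -1

noncomputable def glX (s T : Finset ι) (z : ι → ℝ) : ℝ := ∑ i ∈ s, glEps T i * z i

lemma glX_left {a : ι} {s T : Finset ι} (ha : a ∉ s) (hT : T ⊆ s) (z : ι → ℝ) :
    glX (insert a s) T z = glX s T z - z a := by
  have haT : a ∉ T := fun h => ha (hT h)
  rw [glX, Finset.sum_insert ha, glX, glEps, if_neg haT]
  ring

lemma glX_both {a : ι} {s T : Finset ι} (ha : a ∉ s) (hT : T ⊆ s) (z : ι → ℝ) :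
    glX (insert a s) (insert a T) z = glX s T z + z a := by
  rw [glX, Finset.sum_insert ha, glX, glEps, if_pos (mem_insert_self a T)]
  rw [show (∑ i ∈ s, glEps (insert a T) i * z i) = ∑ i ∈ s, glEps T i * z i from
    Finset.sum_congr rfl fun i hi => by
      have hia : i ≠ a := fun h => ha (h ▸ hi)
      simp [glEps, Finset.mem_insert, hia]]
  ring

lemma glM2 (s : Finset ι) (z : ι → ℝ) :
    ∑ T ∈ s.powerset, (glX s T z) ^ 2 = 2 ^ s.card * ∑ i ∈ s, z i ^ 2 := by
  induction s using Finset.induction_on with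
  | empty => simp [glX]
  | @insert a s ha ih =>
    rw [Finset.sum_powerset_insert ha]
    have e1 : ∑ T ∈ s.powerset, (glX (insert a s) T z) ^ 2
        = ∑ T ∈ s.powerset, (glX s T z - z a) ^ 2 :=
      Finset.sum_congr rfl fun T hT => by rw [glX_left ha (mem_powerset.1 hT)]
    have e2 : ∑ T ∈ s.powerset, (glX (insert a s) (insert a T) z) ^ 2
        = ∑ T ∈ s.powerset, (glX s T z + z a) ^ 2 :=
      Finset.sum_congr rfl fun T hT => by rw [glX_both ha (mem_powerset.1 hT)]
    rw [e1, e2, ← Finset.sum_add_distrib]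
    have e3 : ∑ T ∈ s.powerset, ((glX s T z - z a) ^ 2 + (glX s T z + z a) ^ 2)
        = ∑ T ∈ s.powerset, (2 * (glX s T z) ^ 2 + 2 * z a ^ 2) :=
      Finset.sum_congr rfl fun T _ => by ring
    rw [e3, Finset.sum_add_distrib, ← Finset.mul_sum, ih, Finset.sum_const,
      Finset.card_powerset, Finset.card_insert_of_notMem ha, Finset.sum_insert ha,
      nsmul_eq_mul]
    push_cast
    ring

lemma glM4 (s : Finset ι) (z : ι → ℝ) :
    ∑ T ∈ s.powerset, (glX s T z) ^ 4 ≤ 3 * 2 ^ s.card * (∑ i ∈ s, z i ^ 2) ^ 2 := by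
  induction s using Finset.induction_on with
  | empty => simp [glX]
  | @insert a s ha ih =>
    rw [Finset.sum_powerset_insert ha]
    have e1 : ∑ T ∈ s.powerset, (glX (insert a s) T z) ^ 4
        = ∑ T ∈ s.powerset, (glX s T z - z a) ^ 4 :=
      Finset.sum_congr rfl fun T hT => by rw [glX_left ha (mem_powerset.1 hT)]
    have e2 : ∑ T ∈ s.powerset, (glX (insert a s) (insert a T) z) ^ 4
        = ∑ T ∈ s.powerset, (glX s T z + z a) ^ 4 :=
      Finset.sum_congr rfl fun T hT => by rw [glX_both ha (mem_powerset.1 hT)]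
    rw [e1, e2, ← Finset.sum_add_distrib]
    have e3 : ∑ T ∈ s.powerset, ((glX s T z - z a) ^ 4 + (glX s T z + z a) ^ 4)
        = ∑ T ∈ s.powerset, (2 * (glX s T z) ^ 4 + 12 * (glX s T z) ^ 2 * z a ^ 2 + 2 * z a ^ 4) :=
      Finset.sum_congr rfl fun T _ => by ring
    rw [e3, Finset.sum_add_distrib, Finset.sum_add_distrib, Finset.sum_const,
      Finset.card_powerset, Finset.card_insert_of_notMem ha, Finset.sum_insert ha,
      nsmul_eq_mul]
    have h2 : ∑ T ∈ s.powerset, 12 * (glX s T z) ^ 2 * z a ^ 2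
        = 12 * z a ^ 2 * (2 ^ s.card * ∑ i ∈ s, z i ^ 2) := by
      rw [← glM2 s z, Finset.mul_sum]
      exact Finset.sum_congr rfl fun T _ => by ring
    have h1 : ∑ T ∈ s.powerset, 2 * (glX s T z) ^ 4
        = 2 * ∑ T ∈ s.powerset, (glX s T z) ^ 4 := by
      rw [Finset.mul_sum]
    rw [h1, h2, show (2:ℝ) ^ (s.card + 1) = 2 * 2 ^ s.card from by ring]
    have hN : (0:ℝ) ≤ ∑ i ∈ s, z i ^ 2 := Finset.sum_nonneg fun i _ => sq_nonneg _
    have hQ : (0:ℝ) < (2:ℝ) ^ s.card := by positivity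
    push_cast
    nlinarith [ih, mul_nonneg hQ.le (sq_nonneg (z a ^ 2)), mul_nonneg (mul_nonneg hQ.le hN) (sq_nonneg (z a))]

lemma glM1_le (s : Finset ι) (z : ι → ℝ) :
    ∑ T ∈ s.powerset, |glX s T z| ≤ 2 ^ s.card * Real.sqrt (∑ i ∈ s, z i ^ 2) := by
  have hN : (0:ℝ) ≤ ∑ i ∈ s, z i ^ 2 := Finset.sum_nonneg fun i _ => sq_nonneg _
  have hcs := Finset.sum_mul_sq_le_sq_mul_sq s.powerset (fun _ => (1:ℝ))
    (fun T => |glX s T z|)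
  simp only [one_mul, one_pow] at hcs
  rw [Finset.sum_const, Finset.card_powerset, nsmul_eq_mul, mul_one] at hcs
  have h2 : ∑ T ∈ s.powerset, |glX s T z| ^ 2 = 2 ^ s.card * ∑ i ∈ s, z i ^ 2 := by
    rw [← glM2 s z]
    exact Finset.sum_congr rfl fun T _ => sq_abs _
  rw [h2] at hcs
  have hM1 : (0:ℝ) ≤ ∑ T ∈ s.powerset, |glX s T z| :=
    Finset.sum_nonneg fun T _ => abs_nonneg _
  have hq : (0:ℝ) ≤ 2 ^ s.card := by positivity
  calc ∑ T ∈ s.powerset, |glX s T z|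
      = Real.sqrt ((∑ T ∈ s.powerset, |glX s T z|) ^ 2) := (Real.sqrt_sq hM1).symm
    _ ≤ Real.sqrt ((2:ℝ) ^ s.card * (2 ^ s.card * ∑ i ∈ s, z i ^ 2)) := by
        { push_cast at hcs ⊢; exact Real.sqrt_le_sqrt hcs }
    _ = 2 ^ s.card * Real.sqrt (∑ i ∈ s, z i ^ 2) := by
        rw [← mul_assoc, show (2:ℝ) ^ s.card * 2 ^ s.card = ((2:ℝ) ^ s.card) ^ 2 by ring,
          Real.sqrt_mul (sq_nonneg _), Real.sqrt_sq hq]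

lemma glM1_ge (s : Finset ι) (z : ι → ℝ) :
    2 ^ s.card * Real.sqrt (∑ i ∈ s, z i ^ 2) ≤ 2 * ∑ T ∈ s.powerset, |glX s T z| := by
  have hN : (0:ℝ) ≤ ∑ i ∈ s, z i ^ 2 := Finset.sum_nonneg fun i _ => sq_nonneg _
  have hM1 : (0:ℝ) ≤ ∑ T ∈ s.powerset, |glX s T z| :=
    Finset.sum_nonneg fun T _ => abs_nonneg _
  rcases eq_or_lt_of_le hN with h0 | hNpos
  · rw [← h0, Real.sqrt_zero, mul_zero]
    linarith
  set M1 := ∑ T ∈ s.powerset, |glX s T z| with hM1def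
  set M2 := ∑ T ∈ s.powerset, (glX s T z) ^ 2 with hM2def
  set M3 := ∑ T ∈ s.powerset, |glX s T z| ^ 3 with hM3def
  set M4 := ∑ T ∈ s.powerset, (glX s T z) ^ 4 with hM4def
  set N := ∑ i ∈ s, z i ^ 2 with hNdef
  have hM2 : M2 = 2 ^ s.card * N := glM2 s z
  have hM4 : M4 ≤ 3 * 2 ^ s.card * N ^ 2 := glM4 s z
  have cs1 : M2 ^ 2 ≤ M1 * M3 := by
    have h := Finset.sum_mul_sq_le_sq_mul_sq s.powerset
      (fun T => Real.sqrt |glX s T z|) (fun T => Real.sqrt |glX s T z| * |glX s T z|)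
    have e1 : ∀ T : Finset ι, Real.sqrt |glX s T z| * (Real.sqrt |glX s T z| * |glX s T z|)
        = (glX s T z) ^ 2 := fun T => by
      rw [← mul_assoc, Real.mul_self_sqrt (abs_nonneg _), ← sq_abs]
      ring
    have e2 : ∀ T : Finset ι, (Real.sqrt |glX s T z|) ^ 2 = |glX s T z| := fun T =>
      Real.sq_sqrt (abs_nonneg _)
    have e3 : ∀ T : Finset ι, (Real.sqrt |glX s T z| * |glX s T z|) ^ 2 = |glX s T z| ^ 3 :=
      fun T => by rw [mul_pow, Real.sq_sqrt (abs_nonneg _)]; ring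
    simp only [e1, e2, e3] at h
    exact h
  have cs2 : M3 ^ 2 ≤ M2 * M4 := by
    have h := Finset.sum_mul_sq_le_sq_mul_sq s.powerset
      (fun T => |glX s T z|) (fun T => (glX s T z) ^ 2)
    have e1 : ∀ T : Finset ι, |glX s T z| * (glX s T z) ^ 2 = |glX s T z| ^ 3 := fun T => by
      rw [← sq_abs]; ring
    have e2 : ∀ T : Finset ι, ((glX s T z) ^ 2) ^ 2 = (glX s T z) ^ 4 := fun T => by ring
    have e3 : ∀ T : Finset ι, |glX s T z| ^ 2 = (glX s T z) ^ 2 := fun T => sq_abs _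
    simp only [e1, e2, e3] at h
    exact h
  have hQ : (0:ℝ) < 2 ^ s.card := by positivity
  have hM2pos : 0 < M2 := by rw [hM2]; exact mul_pos hQ hNpos
  have hM3 : 0 ≤ M3 := Finset.sum_nonneg fun T _ => by positivity
  have key : M2 ^ 3 ≤ M1 ^ 2 * M4 := by
    have h1 : M2 ^ 4 ≤ (M1 * M3) ^ 2 := by nlinarith [sq_nonneg M2, cs1, mul_nonneg hM1 hM3]
    have h3 : (M1 * M3) ^ 2 ≤ M1 ^ 2 * (M2 * M4) := by
      have := mul_le_mul_of_nonneg_left cs2 (sq_nonneg M1)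
      nlinarith [this]
    have h4 : M2 ^ 4 ≤ M1 ^ 2 * M2 * M4 := by nlinarith [h1, h3]
    have := le_of_mul_le_mul_right (by nlinarith [h4] : M2 ^ 3 * M2 ≤ (M1 ^ 2 * M4) * M2) hM2pos
    exact this
  have h5 : M2 ^ 3 ≤ M1 ^ 2 * (3 * 2 ^ s.card * N ^ 2) :=
    key.trans (mul_le_mul_of_nonneg_left hM4 (sq_nonneg _))
  have h6 : ((2:ℝ) ^ s.card) ^ 2 * N ≤ 3 * M1 ^ 2 := by
    have hQN : (0:ℝ) < 2 ^ s.card * N ^ 2 := by positivity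
    refine le_of_mul_le_mul_right ?_ hQN
    calc ((2:ℝ) ^ s.card) ^ 2 * N * (2 ^ s.card * N ^ 2) = ((2:ℝ) ^ s.card * N) ^ 3 := by ring
      _ = M2 ^ 3 := by rw [hM2]
      _ ≤ M1 ^ 2 * (3 * 2 ^ s.card * N ^ 2) := h5
      _ = 3 * M1 ^ 2 * (2 ^ s.card * N ^ 2) := by ring
  have hsq : ((2:ℝ) ^ s.card * Real.sqrt N) ^ 2 ≤ (2 * M1) ^ 2 := by
    have e : ((2:ℝ) ^ s.card * Real.sqrt N) ^ 2 = ((2:ℝ) ^ s.card) ^ 2 * N := by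
      rw [mul_pow, Real.sq_sqrt hN]
    rw [e]
    nlinarith [h6, sq_nonneg M1]
  calc (2:ℝ) ^ s.card * Real.sqrt N
      = Real.sqrt (((2:ℝ) ^ s.card * Real.sqrt N) ^ 2) :=
        (Real.sqrt_sq (by positivity)).symm
    _ ≤ Real.sqrt ((2 * M1) ^ 2) := Real.sqrt_le_sqrt hsq
    _ = 2 * M1 := Real.sqrt_sq (by linarith)

end khintchine


lemma gl_sum_abs_nonneg {V : Type*} [Fintype V] (w : V → V → ℝ)
    (hw : ∀ a b, 0 ≤ w a b) (h : V → ℝ) (h' : V → ℝ) :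
    0 ≤ ∑ a, ∑ b, w a b * |h a - h' b| :=
  Finset.sum_nonneg fun a _ => Finset.sum_nonneg fun b _ => mul_nonneg (hw a b) (abs_nonneg _)

lemma gl_exists_good {α : Type*} (s : Finset α) (a b : α → ℝ)
    (ha : ∀ i ∈ s, 0 ≤ a i) (hb : ∀ i ∈ s, 0 ≤ b i) (K : ℝ)
    (hsum : ∑ i ∈ s, a i ≤ K * ∑ i ∈ s, b i) (hpos : 0 < ∑ i ∈ s, b i) :
    ∃ i ∈ s, 0 < b i ∧ a i ≤ K * b i := by
  by_contra hcon
  push_neg at hcon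
  have hpt : ∀ i ∈ s, K * b i ≤ a i := by
    intro i hi
    rcases (hb i hi).lt_or_eq with h | h
    · exact (hcon i hi h).le
    · rw [← h, mul_zero]; exact ha i hi
  have hex : ∃ i ∈ s, 0 < b i := by
    by_contra h
    push_neg at h
    exact absurd (Finset.sum_nonpos h) (not_le.2 hpos)
  obtain ⟨i0, hi0, hbi0⟩ := hex
  have hlt := Finset.sum_lt_sum hpt ⟨i0, hi0, hcon i0 hi0 hbi0⟩
  rw [← Finset.mul_sum] at hlt
  linarith

lemma gl_sweep {V : Type*} [Fintype V] [DecidableEq V] (wG wH : V → V → ℝ)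
    (hwG : ∀ a b, 0 ≤ wG a b) (hwH : ∀ a b, 0 ≤ wH a b) (K : ℝ) :
    ∀ n : ℕ, ∀ f : V → ℝ, (Finset.image f Finset.univ).card ≤ n →
      (∑ a, ∑ b, wG a b * |f a - f b|) ≤ K * ∑ a, ∑ b, wH a b * |f a - f b| →
      0 < ∑ a, ∑ b, wH a b * |f a - f b| →
      ∃ S : Finset V,
        0 < (∑ a, ∑ b, wH a b * |(if a ∈ S then (1:ℝ) else 0) - (if b ∈ S then (1:ℝ) else 0)|) ∧
        (∑ a, ∑ b, wG a b * |(if a ∈ S then (1:ℝ) else 0) - (if b ∈ S then (1:ℝ) else 0)|)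
          ≤ K * ∑ a, ∑ b, wH a b * |(if a ∈ S then (1:ℝ) else 0) - (if b ∈ S then (1:ℝ) else 0)| := by
  intro n
  induction n with
  | zero =>
    intro f hcard hA hB
    exfalso
    obtain ⟨a0, -, ha0⟩ := Finset.exists_lt_of_sum_lt
      (show (∑ a : V, (0:ℝ)) < ∑ a, ∑ b, wH a b * |f a - f b| by simpa using hB)
    have hmem : f a0 ∈ Finset.image f Finset.univ :=
      Finset.mem_image_of_mem f (Finset.mem_univ a0)
    have := Finset.card_pos.2 ⟨_, hmem⟩
    omega
  | succ n IH =>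
    intro f hcard hA hB
    obtain ⟨a0, -, ha0⟩ := Finset.exists_lt_of_sum_lt
      (show (∑ a : V, (0:ℝ)) < ∑ a, ∑ b, wH a b * |f a - f b| by simpa using hB)
    obtain ⟨b0, -, hb0⟩ := Finset.exists_lt_of_sum_lt
      (show (∑ b : V, (0:ℝ)) < ∑ b, wH a0 b * |f a0 - f b| by simpa using ha0)
    have hfneq : f a0 ≠ f b0 := by
      intro h
      rw [h] at hb0
      simp at hb0
    classical
    set img := Finset.image f Finset.univ with himg
    have himgne : img.Nonempty := ⟨f a0, Finset.mem_image_of_mem f (Finset.mem_univ a0)⟩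
    set c := img.min' himgne with hc
    have hcimg : c ∈ img := Finset.min'_mem _ _
    have hcle : ∀ v : V, c ≤ f v := fun v =>
      Finset.min'_le _ _ (Finset.mem_image_of_mem f (Finset.mem_univ v))
    have h2ne : (img.erase c).Nonempty := by
      rcases eq_or_ne (f a0) c with h | h
      · exact ⟨f b0, Finset.mem_erase.2 ⟨by rw [← h]; exact hfneq.symm,
          Finset.mem_image_of_mem f (Finset.mem_univ b0)⟩⟩
      · exact ⟨f a0, Finset.mem_erase.2 ⟨h, Finset.mem_image_of_mem f (Finset.mem_univ a0)⟩⟩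
    set c' := (img.erase c).min' h2ne with hc'
    have hc'img : c' ∈ img.erase c := Finset.min'_mem _ _
    have hcc' : c < c' :=
      lt_of_le_of_ne (Finset.min'_le _ _ (Finset.mem_of_mem_erase hc'img))
        (Ne.symm (Finset.ne_of_mem_erase hc'img))
    have hc'le : ∀ v : V, f v ≠ c → c' ≤ f v := fun v hv =>
      Finset.min'_le _ _ (Finset.mem_erase.2
        ⟨hv, Finset.mem_image_of_mem f (Finset.mem_univ v)⟩)
    set S := Finset.univ.filter (fun v => f v ≤ c) with hS
    have hmemS : ∀ v, v ∈ S ↔ f v = c := by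
      intro v
      constructor
      · intro hv
        exact le_antisymm (by simpa [hS] using hv) (hcle v)
      · intro hv
        simp [hS, hv]
    set g : V → ℝ := fun v => min (f v) c' with hgdef
    set f' : V → ℝ := fun v => max (f v) c' with hf'def
    have hgval : ∀ v, g v = if v ∈ S then c else c' := by
      intro v
      by_cases hv : v ∈ S
      · rw [if_pos hv, hgdef]
        simp only
        rw [(hmemS v).1 hv]
        exact min_eq_left hcc'.le
      · rw [if_neg hv, hgdef]
        simp only
        exact min_eq_right (hc'le v (fun h => hv ((hmemS v).2 h)))
    have hsplit : ∀ a b : V, |f a - f b| = |g a - g b| + |f' a - f' b| := by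
      intro a b
      have ea : g a + f' a = f a + c' := min_add_max _ _
      have eb : g b + f' b = f b + c' := min_add_max _ _
      rcases le_total (f a) (f b) with h | h
      · have h1 : g a ≤ g b := min_le_min h le_rfl
        have h2 : f' a ≤ f' b := max_le_max h le_rfl
        rw [abs_of_nonpos (by linarith), abs_of_nonpos (by linarith),
          abs_of_nonpos (by linarith)]
        linarith
      · have h1 : g b ≤ g a := min_le_min h le_rfl
        have h2 : f' b ≤ f' a := max_le_max h le_rfl
        rw [abs_of_nonneg (by linarith), abs_of_nonneg (by linarith),
          abs_of_nonneg (by linarith)]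
        linarith
    have hgcut : ∀ w : V → V → ℝ, (∑ a, ∑ b, w a b * |g a - g b|)
        = (c' - c) * ∑ a, ∑ b, w a b *
            |(if a ∈ S then (1:ℝ) else 0) - (if b ∈ S then (1:ℝ) else 0)| := by
      intro w
      rw [Finset.mul_sum]
      refine Finset.sum_congr rfl fun a _ => ?_
      rw [Finset.mul_sum]
      refine Finset.sum_congr rfl fun b _ => ?_
      rw [hgval a, hgval b]
      by_cases ha : a ∈ S <;> by_cases hb : b ∈ S <;>
        simp only [if_pos, if_neg, ha, hb, if_true, if_false]
      · simp
      · rw [show |c - c'| = c' - c by rw [abs_sub_comm]; exact abs_of_nonneg (by linarith),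
          show |(1:ℝ) - 0| = 1 by norm_num]
        ring
      · rw [show |c' - c| = c' - c from abs_of_nonneg (by linarith),
          show |(0:ℝ) - 1| = 1 by norm_num]
        ring
      · simp
    have hAsplit : (∑ a, ∑ b, wG a b * |f a - f b|)
        = (∑ a, ∑ b, wG a b * |g a - g b|) + ∑ a, ∑ b, wG a b * |f' a - f' b| := by
      rw [← Finset.sum_add_distrib]
      refine Finset.sum_congr rfl fun a _ => ?_
      rw [← Finset.sum_add_distrib]
      refine Finset.sum_congr rfl fun b _ => ?_
      rw [hsplit a b]
      ring
    have hBsplit : (∑ a, ∑ b, wH a b * |f a - f b|)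
        = (∑ a, ∑ b, wH a b * |g a - g b|) + ∑ a, ∑ b, wH a b * |f' a - f' b| := by
      rw [← Finset.sum_add_distrib]
      refine Finset.sum_congr rfl fun a _ => ?_
      rw [← Finset.sum_add_distrib]
      refine Finset.sum_congr rfl fun b _ => ?_
      rw [hsplit a b]
      ring
    have hximg : Finset.image f' Finset.univ ⊆ img.erase c := by
      intro wv hwv
      obtain ⟨v, -, rfl⟩ := Finset.mem_image.1 hwv
      by_cases hv : f v = c
      · have : f' v = c' := by
          rw [hf'def]
          simp only
          exact max_eq_right (by rw [hv]; exact hcc'.le)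
        rw [this]
        exact hc'img
      · have : f' v = f v := max_eq_left (hc'le v hv)
        rw [this]
        exact Finset.mem_erase.2 ⟨hv, Finset.mem_image_of_mem f (Finset.mem_univ v)⟩
    have hcard' : (Finset.image f' Finset.univ).card ≤ n := by
      have h1 := Finset.card_le_card hximg
      have h2 : (img.erase c).card = img.card - 1 := Finset.card_erase_of_mem hcimg
      have h3 : 1 ≤ img.card := Finset.card_pos.2 himgne
      omega
    rw [hAsplit, hgcut wG, hBsplit, hgcut wH] at hA
    rw [hBsplit, hgcut wH] at hB
    set CGS := ∑ a, ∑ b, wG a b *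
      |(if a ∈ S then (1:ℝ) else 0) - (if b ∈ S then (1:ℝ) else 0)| with hCGSdef
    set CHS := ∑ a, ∑ b, wH a b *
      |(if a ∈ S then (1:ℝ) else 0) - (if b ∈ S then (1:ℝ) else 0)| with hCHSdef
    set Af := ∑ a, ∑ b, wG a b * |f' a - f' b| with hAfdef
    set Bf := ∑ a, ∑ b, wH a b * |f' a - f' b| with hBfdef
    have hCGSnn : 0 ≤ CGS := gl_sum_abs_nonneg wG hwG _ _
    have hCHSnn : 0 ≤ CHS := gl_sum_abs_nonneg wH hwH _ _
    have hAfnn : 0 ≤ Af := gl_sum_abs_nonneg wG hwG _ _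
    have hBfnn : 0 ≤ Bf := gl_sum_abs_nonneg wH hwH _ _
    have hdcc : 0 < c' - c := by linarith
    rw [mul_add] at hA
    have hassoc : K * ((c' - c) * CHS) = (c' - c) * (K * CHS) := by ring
    by_cases hBfpos : 0 < Bf
    · by_cases hq : 0 < CHS
      · by_cases hp : CGS ≤ K * CHS
        · exact ⟨S, hq, hp⟩
        · push_neg at hp
          have hm : (c' - c) * (K * CHS) < (c' - c) * CGS :=
            mul_lt_mul_of_pos_left hp hdcc
          have hrec : Af ≤ K * Bf := by linarith
          exact IH f' hcard' hrec hBfpos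
      · have hq0 : CHS = 0 := le_antisymm (not_lt.1 hq) hCHSnn
        have hrec : Af ≤ K * Bf := by
          have h0 : 0 ≤ (c' - c) * CGS := mul_nonneg hdcc.le hCGSnn
          rw [hq0, mul_zero, mul_zero] at hA
          linarith
        exact IH f' hcard' hrec hBfpos
    · have hBf0 : Bf = 0 := le_antisymm (not_lt.1 hBfpos) hBfnn
      rw [hBf0, add_zero] at hB
      have hq : 0 < CHS := by
        by_contra hq
        push_neg at hq
        nlinarith
      have hp : CGS ≤ K * CHS := by
        rw [hBf0, mul_zero] at hA
        have : (c' - c) * CGS ≤ (c' - c) * (K * CHS) := by linarith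
        exact le_of_mul_le_mul_left this hdcc
      exact ⟨S, hq, hp⟩


lemma gl_pair_eq {d : ℕ} (xa xb : EuclideanSpace ℝ (Fin d)) (T : Finset (Fin d)) :
    (∑ i, glEps T i * xa i) - (∑ i, glEps T i * xb i)
      = glX Finset.univ T (fun i => xa i - xb i) := by
  rw [glX, ← Finset.sum_sub_distrib]
  exact Finset.sum_congr rfl fun i _ => by ring

lemma gl_pair_norm {d : ℕ} (xa xb : EuclideanSpace ℝ (Fin d)) :
    Real.sqrt (∑ i, (xa i - xb i) ^ 2) = ‖xa - xb‖ := by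
  rw [EuclideanSpace.norm_eq]
  congr 1
  refine Finset.sum_congr rfl fun i _ => ?_
  rw [show (xa - xb) i = xa i - xb i from rfl, Real.norm_eq_abs, sq_abs]

lemma gl_pair_le {d : ℕ} (xa xb : EuclideanSpace ℝ (Fin d)) :
    ∑ T ∈ (Finset.univ : Finset (Fin d)).powerset,
        |(∑ i, glEps T i * xa i) - (∑ i, glEps T i * xb i)| ≤ 2 ^ d * ‖xa - xb‖ := by
  simp only [gl_pair_eq]
  have := glM1_le (Finset.univ : Finset (Fin d)) (fun i => xa i - xb i)
  rwa [Finset.card_univ, Fintype.card_fin, gl_pair_norm] at this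

lemma gl_pair_ge {d : ℕ} (xa xb : EuclideanSpace ℝ (Fin d)) :
    2 ^ d * ‖xa - xb‖ ≤ 2 * ∑ T ∈ (Finset.univ : Finset (Fin d)).powerset,
        |(∑ i, glEps T i * xa i) - (∑ i, glEps T i * xb i)| := by
  simp only [gl_pair_eq]
  have := glM1_ge (Finset.univ : Finset (Fin d)) (fun i => xa i - xb i)
  rwa [Finset.card_univ, Fintype.card_fin, gl_pair_norm] at this

lemma gl_agg_swap {V : Type*} [Fintype V] {d : ℕ} (F : Finset (Fin d) → V → V → ℝ) :
    ∑ T ∈ (Finset.univ : Finset (Fin d)).powerset, ∑ a, ∑ b, F T a b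
      = ∑ a, ∑ b, ∑ T ∈ (Finset.univ : Finset (Fin d)).powerset, F T a b := by
  rw [Finset.sum_comm]
  exact Finset.sum_congr rfl fun a _ => Finset.sum_comm

lemma gl_agg_upper {V : Type*} [Fintype V] {d : ℕ} (x : V → EuclideanSpace ℝ (Fin d))
    (w : V → V → ℝ) (hw : ∀ a b, 0 ≤ w a b) :
    ∑ T ∈ (Finset.univ : Finset (Fin d)).powerset, ∑ a, ∑ b, w a b *
        |(∑ i, glEps T i * x a i) - (∑ i, glEps T i * x b i)|
      ≤ 2 ^ d * ∑ a, ∑ b, w a b * ‖x a - x b‖ := by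
  rw [gl_agg_swap]
  calc ∑ a, ∑ b, ∑ T ∈ (Finset.univ : Finset (Fin d)).powerset, w a b *
        |(∑ i, glEps T i * x a i) - (∑ i, glEps T i * x b i)|
      ≤ ∑ a, ∑ b, w a b * (2 ^ d * ‖x a - x b‖) := by
        refine Finset.sum_le_sum fun a _ => Finset.sum_le_sum fun b _ => ?_
        rw [← Finset.mul_sum]
        exact mul_le_mul_of_nonneg_left (gl_pair_le _ _) (hw a b)
    _ = 2 ^ d * ∑ a, ∑ b, w a b * ‖x a - x b‖ := by
        rw [Finset.mul_sum]
        refine Finset.sum_congr rfl fun a _ => ?_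
        rw [Finset.mul_sum]
        exact Finset.sum_congr rfl fun b _ => by ring

lemma gl_agg_lower {V : Type*} [Fintype V] {d : ℕ} (x : V → EuclideanSpace ℝ (Fin d))
    (w : V → V → ℝ) (hw : ∀ a b, 0 ≤ w a b) :
    2 ^ d * ∑ a, ∑ b, w a b * ‖x a - x b‖
      ≤ 2 * ∑ T ∈ (Finset.univ : Finset (Fin d)).powerset, ∑ a, ∑ b, w a b *
        |(∑ i, glEps T i * x a i) - (∑ i, glEps T i * x b i)| := by
  rw [gl_agg_swap]
  calc 2 ^ d * ∑ a, ∑ b, w a b * ‖x a - x b‖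
      = ∑ a, ∑ b, w a b * (2 ^ d * ‖x a - x b‖) := by
        rw [Finset.mul_sum]
        refine Finset.sum_congr rfl fun a _ => ?_
        rw [Finset.mul_sum]
        exact Finset.sum_congr rfl fun b _ => by ring
    _ ≤ ∑ a, ∑ b, w a b * (2 * ∑ T ∈ (Finset.univ : Finset (Fin d)).powerset,
          |(∑ i, glEps T i * x a i) - (∑ i, glEps T i * x b i)|) := by
        refine Finset.sum_le_sum fun a _ => Finset.sum_le_sum fun b _ => ?_
        exact mul_le_mul_of_nonneg_left (gl_pair_ge _ _) (hw a b)
    _ = 2 * ∑ a, ∑ b, ∑ T ∈ (Finset.univ : Finset (Fin d)).powerset, w a b *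
          |(∑ i, glEps T i * x a i) - (∑ i, glEps T i * x b i)| := by
        rw [Finset.mul_sum]
        refine Finset.sum_congr rfl fun a _ => ?_
        rw [Finset.mul_sum]
        refine Finset.sum_congr rfl fun b _ => ?_
        rw [← Finset.mul_sum]
        ring


/-- Total weight (over ordered pairs) of a weighted graph. -/
noncomputable def total {V : Type*} [Fintype V] (G : V → V → ℝ) : ℝ := ∑ u, ∑ v, G u v

/-- Normalized cut weight `Ḡ(S)`. -/
noncomputable def ncut {V : Type*} [Fintype V] [DecidableEq V] (G : V → V → ℝ) (S : Finset V) : ℝ :=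
  cutval G S / total G

/-- Rounding the Goemans–Linial relaxation in the spread case: if `H` is rank-1 with
`H̄(u,v) = μ(u)μ(v)`, `{x_v}` is a feasible solution of cost `ε`, and
`P_{u,v∼μ×μ}[‖x_u − x_v‖² ≥ 1/4] ≥ 1/2`, then there is a cut of sparsity at most `8√ε`. -/
theorem round_goemans_linial_spread {V : Type*} [Fintype V] [DecidableEq V]
    (G H : V → V → ℝ) (μ : V → ℝ) (ε : ℝ) (d : ℕ) (x : V → EuclideanSpace ℝ (Fin d))
    (hd : 1 ≤ d)
    (hGsymm : ∀ u v, G u v = G v u) (hGnonneg : ∀ u v, 0 ≤ G u v)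
    (hHsymm : ∀ u v, H u v = H v u) (hHnonneg : ∀ u v, 0 ≤ H u v)
    (hGtot : 0 < total G) (hHtot : 0 < total H)
    (hμnonneg : ∀ v, 0 ≤ μ v) (hμsum : ∑ v, μ v = 1)
    (hrank1 : ∀ u v, H u v / total H = μ u * μ v)
    (htri : ∀ u v w : V, ‖x u - x w‖ ^ 2 ≤ ‖x u - x v‖ ^ 2 + ‖x v - x w‖ ^ 2)
    (hnorm : ∑ u, ∑ v, μ u * μ v * ‖x u - x v‖ ^ 2 = 1)
    (hcost : ∑ u, ∑ v, (G u v / total G) * ‖x u - x v‖ ^ 2 = ε)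
    (hspread : (1 : ℝ) / 2 ≤ ∑ u, ∑ v with 1 / 4 ≤ ‖x u - x v‖ ^ 2, μ u * μ v) :
    ∃ S : Finset V, 0 < ncut H S ∧ ncut G S / ncut H S ≤ 8 * Real.sqrt ε := by
  classical
  have hwGnn : ∀ a b : V, 0 ≤ G a b / total G := fun a b => div_nonneg (hGnonneg a b) hGtot.le
  have hwHnn : ∀ a b : V, 0 ≤ μ a * μ b := fun a b => mul_nonneg (hμnonneg a) (hμnonneg b)
  have hwG1 : ∑ a : V, ∑ b : V, G a b / total G = 1 := by
    have h : (∑ a : V, ∑ b : V, G a b) / total G = ∑ a : V, ∑ b : V, G a b / total G := by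
      rw [Finset.sum_div]
      exact Finset.sum_congr rfl fun a _ => Finset.sum_div _ _ _
    rw [← h, show (∑ a : V, ∑ b : V, G a b) = total G from rfl]
    exact div_self hGtot.ne'
  have hε0 : 0 ≤ ε := by
    rw [← hcost]
    exact Finset.sum_nonneg fun a _ => Finset.sum_nonneg fun b _ =>
      mul_nonneg (hwGnn a b) (sq_nonneg _)
  -- Step A : Cauchy-Schwarz
  have hSA : ∑ a : V, ∑ b : V, (G a b / total G) * ‖x a - x b‖ ≤ Real.sqrt ε := by
    have hSnn : 0 ≤ ∑ a : V, ∑ b : V, (G a b / total G) * ‖x a - x b‖ :=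
      Finset.sum_nonneg fun a _ => Finset.sum_nonneg fun b _ =>
        mul_nonneg (hwGnn a b) (norm_nonneg _)
    have hcs := Finset.sum_mul_sq_le_sq_mul_sq (Finset.univ : Finset (V × V))
      (fun p => Real.sqrt (G p.1 p.2 / total G))
      (fun p => Real.sqrt (G p.1 p.2 / total G) * ‖x p.1 - x p.2‖)
    have e1 : ∀ p : V × V, Real.sqrt (G p.1 p.2 / total G) *
        (Real.sqrt (G p.1 p.2 / total G) * ‖x p.1 - x p.2‖)
        = (G p.1 p.2 / total G) * ‖x p.1 - x p.2‖ := fun p => by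
      rw [← mul_assoc, Real.mul_self_sqrt (hwGnn _ _)]
    have e2 : ∀ p : V × V, (Real.sqrt (G p.1 p.2 / total G)) ^ 2 = G p.1 p.2 / total G :=
      fun p => Real.sq_sqrt (hwGnn _ _)
    have e3 : ∀ p : V × V, (Real.sqrt (G p.1 p.2 / total G) * ‖x p.1 - x p.2‖) ^ 2
        = (G p.1 p.2 / total G) * ‖x p.1 - x p.2‖ ^ 2 := fun p => by
      rw [mul_pow, Real.sq_sqrt (hwGnn _ _)]
    simp only [e1, e2, e3] at hcs
    rw [Fintype.sum_prod_type, Fintype.sum_prod_type, Fintype.sum_prod_type] at hcs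
    simp only at hcs
    rw [hwG1, hcost, one_mul] at hcs
    calc ∑ a : V, ∑ b : V, (G a b / total G) * ‖x a - x b‖
        = Real.sqrt ((∑ a : V, ∑ b : V, (G a b / total G) * ‖x a - x b‖) ^ 2) :=
          (Real.sqrt_sq hSnn).symm
      _ ≤ Real.sqrt ε := Real.sqrt_le_sqrt hcs
  -- Step B : spread gives lower bound on average distance
  have hSB : (1:ℝ)/4 ≤ ∑ a : V, ∑ b : V, μ a * μ b * ‖x a - x b‖ := by
    have hstep : ∀ u : V, (∑ v with 1 / 4 ≤ ‖x u - x v‖ ^ 2, μ u * μ v * (1/2))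
        ≤ ∑ v : V, μ u * μ v * ‖x u - x v‖ := by
      intro u
      have h1 : (∑ v with 1 / 4 ≤ ‖x u - x v‖ ^ 2, μ u * μ v * (1/2))
          ≤ ∑ v with 1 / 4 ≤ ‖x u - x v‖ ^ 2, μ u * μ v * ‖x u - x v‖ := by
        refine Finset.sum_le_sum fun v hv => ?_
        have hv' : 1/4 ≤ ‖x u - x v‖ ^ 2 := (Finset.mem_filter.1 hv).2
        have h2 : (1:ℝ)/2 ≤ ‖x u - x v‖ := by nlinarith [norm_nonneg (x u - x v)]
        exact mul_le_mul_of_nonneg_left h2 (hwHnn u v)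
      exact h1.trans (Finset.sum_le_sum_of_subset_of_nonneg (Finset.filter_subset _ _)
        fun v _ _ => mul_nonneg (hwHnn u v) (norm_nonneg _))
    have h2 : ∑ u : V, (∑ v with 1 / 4 ≤ ‖x u - x v‖ ^ 2, μ u * μ v * (1/2))
        ≤ ∑ u : V, ∑ v : V, μ u * μ v * ‖x u - x v‖ :=
      Finset.sum_le_sum fun u _ => hstep u
    have h3 : ∑ u : V, (∑ v with 1 / 4 ≤ ‖x u - x v‖ ^ 2, μ u * μ v * (1/2))
        = (∑ u : V, ∑ v with 1 / 4 ≤ ‖x u - x v‖ ^ 2, μ u * μ v) * (1/2) := by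
      rw [Finset.sum_mul]
      exact Finset.sum_congr rfl fun u _ => by rw [Finset.sum_mul]
    rw [h3] at h2
    linarith
  -- aggregated bounds over sign patterns
  set P := (Finset.univ : Finset (Fin d)).powerset with hP
  have hAagg := gl_agg_upper x (fun a b => G a b / total G) hwGnn
  have hBagg := gl_agg_lower x (fun a b => μ a * μ b) hwHnn
  simp only at hAagg hBagg
  have hAagg' : ∑ T ∈ P, ∑ a : V, ∑ b : V, (G a b / total G) *
      |(∑ i, glEps T i * x a i) - (∑ i, glEps T i * x b i)| ≤ 2 ^ d * Real.sqrt ε :=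
    hAagg.trans (mul_le_mul_of_nonneg_left hSA (by positivity))
  have hBagg' : (2:ℝ) ^ d * (1/4) ≤ 2 * ∑ T ∈ P, ∑ a : V, ∑ b : V, (μ a * μ b) *
      |(∑ i, glEps T i * x a i) - (∑ i, glEps T i * x b i)| :=
    le_trans (mul_le_mul_of_nonneg_left hSB (by positivity)) hBagg
  -- choose a good sign pattern
  obtain ⟨T, hTP, hbT, habT⟩ := gl_exists_good P
    (fun T => ∑ a : V, ∑ b : V, (G a b / total G) *
      |(∑ i, glEps T i * x a i) - (∑ i, glEps T i * x b i)|)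
    (fun T => ∑ a : V, ∑ b : V, (μ a * μ b) *
      |(∑ i, glEps T i * x a i) - (∑ i, glEps T i * x b i)|)
    (fun T _ => gl_sum_abs_nonneg _ hwGnn _ _)
    (fun T _ => gl_sum_abs_nonneg _ hwHnn _ _)
    (8 * Real.sqrt ε)
    (by
      refine hAagg'.trans ?_
      have h8 : (2:ℝ) ^ d * Real.sqrt ε = (8 * Real.sqrt ε) * ((2:ℝ) ^ d * (1/4) / 2) := by
        ring
      rw [h8]
      refine mul_le_mul_of_nonneg_left ?_ (by positivity)
      linarith)
    (by
      have : (0:ℝ) < 2 ^ d * (1/4) := by positivity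
      linarith)
  -- sweep cut
  obtain ⟨S, hS1, hS2⟩ := gl_sweep (fun a b => G a b / total G) (fun a b => μ a * μ b)
    hwGnn hwHnn (8 * Real.sqrt ε)
    ((Finset.image (fun v => ∑ i, glEps T i * x v i) Finset.univ).card)
    (fun v => ∑ i, glEps T i * x v i) le_rfl habT hbT
  -- translate ncut
  have hH : ncut H S = ∑ a : V, ∑ b : V, (μ a * μ b) *
      |(if a ∈ S then (1:ℝ) else 0) - (if b ∈ S then (1:ℝ) else 0)| := by
    rw [ncut, cutval, Finset.sum_div]
    refine Finset.sum_congr rfl fun a _ => ?_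
    rw [Finset.sum_div]
    refine Finset.sum_congr rfl fun b _ => ?_
    rw [mul_div_right_comm, hrank1]
  have hG : ncut G S = ∑ a : V, ∑ b : V, (G a b / total G) *
      |(if a ∈ S then (1:ℝ) else 0) - (if b ∈ S then (1:ℝ) else 0)| := by
    rw [ncut, cutval, Finset.sum_div]
    refine Finset.sum_congr rfl fun a _ => ?_
    rw [Finset.sum_div]
    refine Finset.sum_congr rfl fun b _ => ?_
    rw [mul_div_right_comm]
  refine ⟨S, ?_, ?_⟩
  · rw [hH]; exact hS1
  · rw [hH, hG, div_le_iff₀ hS1]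
    calc (∑ a : V, ∑ b : V, (G a b / total G) *
          |(if a ∈ S then (1:ℝ) else 0) - (if b ∈ S then (1:ℝ) else 0)|)
        ≤ (8 * Real.sqrt ε) * ∑ a : V, ∑ b : V, (μ a * μ b) *
          |(if a ∈ S then (1:ℝ) else 0) - (if b ∈ S then (1:ℝ) else 0)| := hS2
      _ = _ := by ring
end

section
/- Let G be a weighted graph on a finite vertex set V with G_tot > 0, let s, t ∈ V, and let x : V → ℝ satisfy x_s = 0, x_t = 1, and Σ_{u,v∈V} Ḡ(u,v)·(x_u − x_v)² = ε. For θ ∈ [0,1) let S_θ = {v ∈ V : x_v ≤ θ}. Then the average over θ uniform in [0,1) of Σ_{u,v} Ḡ(u,v)·|1_{S_θ}(u) − 1_{S_θ}(v)| is at most Σ_{u,v} Ḡ(u,v)·|x_u − x_v| ≤ √ε; consequently there exists θ ∈ [0,1) such that s ∈ S_θ, t ∉ S_θ, and Σ_{u,v} Ḡ(u,v)·|1_{S_θ}(u) − 1_{S_θ}(v)| ≤ √ε. -/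
/-!
Each edge `uv` is cut by `S_θ` exactly for `θ` between `x u` and `x v`, so integrating over `θ`
bounds its contribution by `|x u - x v|`. Cauchy–Schwarz against the probability weights `Ḡ`
bounds `Σ Ḡ |x u - x v|` by `√ε`. Every `θ ∈ (0, 1)` separates `s` from `t`, and a function whose
average over `(0, 1)` is at most `√ε` takes a value at most `√ε` somewhere there.
-/

open MeasureTheory

/-- Fraction of the `G`-edges cut by the threshold cut `S_θ = {v : x v ≤ θ}`. -/
noncomputable def thresholdCut {V : Type*} [Fintype V] (G : V → V → ℝ) (x : V → ℝ) (θ : ℝ) : ℝ :=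
  ∑ u, ∑ v, (G u v / total G) *
    |(if x u ≤ θ then (1 : ℝ) else 0) - (if x v ≤ θ then (1 : ℝ) else 0)|

lemma abs_ite_sub_ite_eq_indicator (a b θ : ℝ) :
    |(if a ≤ θ then (1 : ℝ) else 0) - (if b ≤ θ then (1 : ℝ) else 0)| =
      (Set.Ico (min a b) (max a b)).indicator 1 θ := by
  simp only [Set.indicator_apply, Set.mem_Ico, min_le_iff, lt_max_iff, Pi.one_apply]
  split_ifs <;> norm_num <;> grind

lemma integrable_abs_ite_sub_ite (a b : ℝ) :
    Integrable fun θ => |(if a ≤ θ then (1 : ℝ) else 0) - (if b ≤ θ then (1 : ℝ) else 0)| := by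
  simp_rw [abs_ite_sub_ite_eq_indicator]
  exact (integrableOn_const measure_Ico_lt_top.ne).integrable_indicator measurableSet_Ico

lemma integral_abs_ite_sub_ite_le (a b : ℝ) {c d : ℝ} (hcd : c ≤ d) :
    ∫ θ in c..d, |(if a ≤ θ then (1 : ℝ) else 0) - (if b ≤ θ then (1 : ℝ) else 0)| ≤ |a - b| :=
  calc ∫ θ in c..d, |(if a ≤ θ then (1 : ℝ) else 0) - (if b ≤ θ then (1 : ℝ) else 0)|
      ≤ ∫ θ, |(if a ≤ θ then (1 : ℝ) else 0) - (if b ≤ θ then (1 : ℝ) else 0)| := by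
        rw [intervalIntegral.integral_of_le hcd]
        exact setIntegral_le_integral (integrable_abs_ite_sub_ite a b)
          (.of_forall fun θ => abs_nonneg _)
    _ = |a - b| := by
        simp_rw [abs_ite_sub_ite_eq_indicator]
        rw [integral_indicator_one measurableSet_Ico, Real.volume_real_Ico_of_le min_le_max,
          max_sub_min_eq_abs']

section WeightedGraph

variable {V : Type*} [Fintype V] (G : V → V → ℝ) (x : V → ℝ)

lemma integrable_thresholdCut : Integrable (thresholdCut G x) :=
  integrable_finsetSum _ fun u _ => integrable_finsetSum _ fun v _ =>
    (integrable_abs_ite_sub_ite (x u) (x v)).const_mul _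

variable {G}

lemma total_nonneg (hG : ∀ u v, 0 ≤ G u v) : 0 ≤ total G :=
  Finset.sum_nonneg fun u _ => Finset.sum_nonneg fun v _ => hG u v

lemma div_total_nonneg (hG : ∀ u v, 0 ≤ G u v) (u v : V) : 0 ≤ G u v / total G :=
  div_nonneg (hG u v) (total_nonneg hG)

lemma sum_sum_div_total (hG : total G ≠ 0) : ∑ u, ∑ v, G u v / total G = 1 := by
  simp_rw [← Finset.sum_div]
  exact div_self hG

lemma integral_thresholdCut_le (hG : ∀ u v, 0 ≤ G u v) {c d : ℝ} (hcd : c ≤ d) :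
    ∫ θ in c..d, thresholdCut G x θ ≤ ∑ u, ∑ v, (G u v / total G) * |x u - x v| := by
  have hint u v : Integrable fun θ => (G u v / total G) *
      |(if x u ≤ θ then (1 : ℝ) else 0) - (if x v ≤ θ then (1 : ℝ) else 0)| :=
    (integrable_abs_ite_sub_ite (x u) (x v)).const_mul _
  unfold thresholdCut
  rw [intervalIntegral.integral_finsetSum fun u _ =>
    (integrable_finsetSum _ fun v _ => hint u v).intervalIntegrable]
  refine Finset.sum_le_sum fun u _ => ?_
  rw [intervalIntegral.integral_finsetSum fun v _ => (hint u v).intervalIntegrable]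
  refine Finset.sum_le_sum fun v _ => ?_
  rw [intervalIntegral.integral_const_mul]
  exact mul_le_mul_of_nonneg_left (integral_abs_ite_sub_ite_le _ _ hcd) (div_total_nonneg hG u v)

end WeightedGraph

lemma sum_mul_abs_le_sqrt_sum_mul_sq {ι : Type*} (s : Finset ι) {w d : ι → ℝ}
    (hw : ∀ i ∈ s, 0 ≤ w i) (hw1 : ∑ i ∈ s, w i = 1) :
    ∑ i ∈ s, w i * |d i| ≤ √(∑ i ∈ s, w i * d i ^ 2) := by
  refine Real.le_sqrt_of_sq_le ?_
  calc (∑ i ∈ s, w i * |d i|) ^ 2 ≤ (∑ i ∈ s, w i) * ∑ i ∈ s, w i * d i ^ 2 :=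
        Finset.sum_sq_le_sum_mul_sum_of_sq_le_mul s hw
          (fun i hi => mul_nonneg (hw i hi) (sq_nonneg _))
          fun i _ => le_of_eq (by rw [mul_pow, sq_abs]; ring)
    _ = ∑ i ∈ s, w i * d i ^ 2 := by rw [hw1, one_mul]

lemma exists_mem_Ioo_le_of_integral_le {f : ℝ → ℝ} {a b c : ℝ} (hab : a < b)
    (hf : IntervalIntegrable f volume a b) (h : ∫ θ in a..b, f θ ≤ (b - a) * c) :
    ∃ θ ∈ Set.Ioo a b, f θ ≤ c := by
  by_contra! hlt
  have hpos := intervalIntegral.intervalIntegral_pos_of_pos_on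
    (hf.sub intervalIntegrable_const) (fun θ hθ => sub_pos.mpr (hlt θ hθ)) hab
  rw [intervalIntegral.integral_sub hf intervalIntegrable_const, intervalIntegral.integral_const,
    smul_eq_mul] at hpos
  linarith

theorem threshold_rounding_st_cut_general {V : Type*} [Fintype V]
    (G : V → V → ℝ) (s t : V) (x : V → ℝ) (ε : ℝ)
    (hGnonneg : ∀ u v, 0 ≤ G u v)
    (hGtot : 0 < total G)
    (hs : x s = 0) (ht : x t = 1)
    (hcost : ∑ u, ∑ v, (G u v / total G) * (x u - x v) ^ 2 = ε) :
    (∫ θ in (0 : ℝ)..1, thresholdCut G x θ) ≤ ∑ u, ∑ v, (G u v / total G) * |x u - x v| ∧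
    (∑ u, ∑ v, (G u v / total G) * |x u - x v|) ≤ Real.sqrt ε ∧
    ∃ θ ∈ Set.Ico (0 : ℝ) 1, x s ≤ θ ∧ ¬ x t ≤ θ ∧ thresholdCut G x θ ≤ Real.sqrt ε := by
  have haverage := integral_thresholdCut_le x hGnonneg zero_le_one
  have hcauchy : ∑ u, ∑ v, (G u v / total G) * |x u - x v| ≤ √ε := by
    have := sum_mul_abs_le_sqrt_sum_mul_sq Finset.univ (w := fun p : V × V => G p.1 p.2 / total G)
      (d := fun p => x p.1 - x p.2) (fun p _ => div_total_nonneg hGnonneg p.1 p.2)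
      ((Fintype.sum_prod_type' _).trans (sum_sum_div_total hGtot.ne'))
    simpa only [Fintype.sum_prod_type, hcost] using this
  obtain ⟨θ, hθ, hcut⟩ := exists_mem_Ioo_le_of_integral_le zero_lt_one
    (integrable_thresholdCut G x).intervalIntegrable (c := √ε) (by linarith)
  exact ⟨haverage, hcauchy, θ, Set.Ioo_subset_Ico_self hθ, hs ▸ hθ.1.le, ht ▸ hθ.2.not_ge, hcut⟩

/-- Cheeger-type rounding for minimum s-t-cut: if `x_s = 0`, `x_t = 1` and
`Σ Ḡ(u,v)(x_u − x_v)² = ε`, then the average over a uniform threshold `θ ∈ [0,1)` of the cut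
fraction is at most `Σ Ḡ(u,v)|x_u − x_v| ≤ √ε`, so some threshold cut separates `s` from `t`
and cuts at most a `√ε` fraction of the edges. -/
theorem threshold_rounding_st_cut {V : Type*} [Fintype V]
    (G : V → V → ℝ) (s t : V) (x : V → ℝ) (ε : ℝ)
    (hGsymm : ∀ u v, G u v = G v u) (hGnonneg : ∀ u v, 0 ≤ G u v)
    (hGtot : 0 < total G)
    (hs : x s = 0) (ht : x t = 1)
    (hcost : ∑ u, ∑ v, (G u v / total G) * (x u - x v) ^ 2 = ε) :
    (∫ θ in (0 : ℝ)..1, thresholdCut G x θ) ≤ ∑ u, ∑ v, (G u v / total G) * |x u - x v| ∧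
    (∑ u, ∑ v, (G u v / total G) * |x u - x v|) ≤ Real.sqrt ε ∧
    ∃ θ ∈ Set.Ico (0 : ℝ) 1, x s ≤ θ ∧ ¬ x t ≤ θ ∧ thresholdCut G x θ ≤ Real.sqrt ε :=
  threshold_rounding_st_cut_general G s t x ε hGnonneg hGtot hs ht hcost
end

section
/- Let k ≥ 1 and consider the following instance on 2k vertices v_1, …, v_{2k}: G contains a path of edges of weight 1 between consecutive vertices v_1, v_2, …, v_{k+1} (together with an arbitrary graph of maximum degree at most a constant D and at least one edge on {v_{k+1}, …, v_{2k}}), and H is the complete graph on the k+1 vertices {v_1, v_{k+1}, v_{k+2}, …, v_{2k}}. Then the vector x defined by x_{v_i} = i/k for i ≤ k and x_{v_i} = 1 for i > k satisfies: Σ_{i,j} G(v_i,v_j)·|x_{v_i} − x_{v_j}|² ≤ C₁/k for the path-edge contribution plus zero from edges inside {v_{k+1},…,v_{2k}}, Σ_{i,j} H(v_i,v_j)·|x_{v_i} − x_{v_j}|² ≥ c₂·k, G_tot ≤ C₃·k, and H_tot ≥ c₄·k², so the spectral relaxation value (Σ Ḡ(u,v)(x_u−x_v)²)/(Σ H̄(u,v)(x_u−x_v)²)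 is at most C/k for a universal constant C depending only on D. -/
/-!
The test vector climbs from `1/k` to `1` in steps of `1/k` along the path and is constant on the
block `{v_{k+1}, …, v_{2k}}` carrying `G0`, so only the path edges contribute to the `G`-energy,
at most `1/k²` each: the energy is `O(1/k)` while `G_tot ≥ k`. In the clique `H` the vertex `v_1`
sits at `1/k ≤ 1/2` and the other `k` vertices at `1`, so the `H`-energy is at least `k/4`, while
`H_tot ≤ 4k²`. Normalizing gives the ratio `O(1/k²) / Ω(1/k) = O(1/k)`. The edge of `G0` inside
the block forces `k ≥ 2`, which keeps `H_tot` of order `k²`.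
-/

open Finset

section

variable {ι : Type*} [Fintype ι]

lemma sum_sum_div_mul_sq (W : ι → ι → ℝ) (x : ι → ℝ) (T : ℝ) :
    ∑ i, ∑ j, W i j / T * (x i - x j) ^ 2 = (∑ i, ∑ j, W i j * |x i - x j| ^ 2) / T := by
  simp only [sum_div, sq_abs, div_mul_eq_mul_div]

lemma sum_boole_le_one (p : ι → Prop) [DecidablePred p] (hp : ∀ a b, p a → p b → a = b) :
    ∑ j, (if p j then (1 : ℝ) else 0) ≤ 1 := by
  rw [sum_boole]
  exact_mod_cast card_le_one.mpr fun a ha b hb => hp a b (mem_filter.mp ha).2 (mem_filter.mp hb).2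

end

lemma div_div_div_le_of_bounds {a A b B α β γ δ : ℝ} (ha₀ : 0 ≤ a) (ha : a ≤ α) (hβ : 0 < β)
    (hA : β ≤ A) (hγ : 0 < γ) (hb : γ ≤ b) (hB₀ : 0 < B) (hB : B ≤ δ) :
    a / A / (b / B) ≤ α / β / (γ / δ) :=
  div_le_div₀ (div_nonneg (ha₀.trans ha) hβ.le) (div_le_div₀ (ha₀.trans ha) ha hβ hA)
    (div_pos hγ (hB₀.trans_le hB)) (div_le_div₀ (hγ.le.trans hb) hb hB₀ hB)

lemma Fin.card_filter_le_val (n m : ℕ) : #{i : Fin n | m ≤ (i : ℕ)} = n - m := by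
  have h := card_filter_add_card_filter_not (s := (univ : Finset (Fin n))) (fun i => (i : ℕ) < m)
  simp only [not_lt, Fin.card_filter_val_lt, card_univ, Fintype.card_fin] at h
  omega

namespace Lollipop

variable {k : ℕ}

def IsPathEdge (k : ℕ) (i j : Fin (2 * k)) : Prop :=
  ((i : ℕ) + 1 = j ∧ (i : ℕ) < k) ∨ ((j : ℕ) + 1 = i ∧ (j : ℕ) < k)

instance (k : ℕ) : DecidableRel (IsPathEdge k) := fun _ _ =>
  inferInstanceAs (Decidable (_ ∨ _))

noncomputable def G (k : ℕ) (G0 : Fin (2 * k) → Fin (2 * k) → ℝ) (i j : Fin (2 * k)) : ℝ :=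
  (if IsPathEdge k i j then 1 else 0) + G0 i j

noncomputable def H (k : ℕ) (i j : Fin (2 * k)) : ℝ :=
  if i ≠ j ∧ ((i : ℕ) = 0 ∨ k ≤ (i : ℕ)) ∧ ((j : ℕ) = 0 ∨ k ≤ (j : ℕ)) then 1 else 0

noncomputable def testVector (k : ℕ) (i : Fin (2 * k)) : ℝ :=
  if (i : ℕ) < k then ((i : ℕ) + 1) / k else 1

lemma two_le_of_edge {G0 : Fin (2 * k) → Fin (2 * k) → ℝ} (hdiag : ∀ i, G0 i i = 0)
    (hsupp : ∀ i j, G0 i j ≠ 0 → k ≤ (i : ℕ) ∧ k ≤ (j : ℕ)) (hedge : ∃ i j, G0 i j = 1) :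
    2 ≤ k := by
  obtain ⟨i, j, hij⟩ := hedge
  obtain ⟨hi, hj⟩ := hsupp i j (by simp [hij])
  have hne : i ≠ j := by rintro rfl; simp [hdiag] at hij
  have := Fin.val_ne_of_ne hne
  omega

lemma sum_pathEdge_le_two (i : Fin (2 * k)) :
    ∑ j, (if IsPathEdge k i j then (1 : ℝ) else 0) ≤ 2 := by
  have hsucc := sum_boole_le_one (fun j : Fin (2 * k) => (j : ℕ) = i + 1)
    fun a b ha hb => Fin.ext (ha.trans hb.symm)
  have hpred := sum_boole_le_one (fun j : Fin (2 * k) => (i : ℕ) = j + 1)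
    fun a b ha hb => Fin.ext (by omega)
  calc ∑ j, (if IsPathEdge k i j then (1 : ℝ) else 0)
      ≤ ∑ j : Fin (2 * k), ((if (j : ℕ) = i + 1 then 1 else 0) +
          (if (i : ℕ) = j + 1 then 1 else 0)) := by
        refine sum_le_sum fun j _ => ?_
        by_cases hij : IsPathEdge k i j
        · rw [if_pos hij]
          unfold IsPathEdge at hij
          split_ifs <;> norm_num
          omega
        · rw [if_neg hij]
          positivity
    _ ≤ 2 := by rw [sum_add_distrib]; linarith

lemma sum_sum_pathEdge_le :
    ∑ i, ∑ j, (if IsPathEdge k i j then (1 : ℝ) else 0) ≤ 4 * k := by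
  calc _ ≤ #(univ : Finset (Fin (2 * k))) • (2 : ℝ) :=
        sum_le_card_nsmul _ _ _ fun i _ => sum_pathEdge_le_two i
    _ = 4 * k := by simp; ring

lemma testVector_of_le {i : Fin (2 * k)} (h : k ≤ (i : ℕ)) : testVector k i = 1 :=
  if_neg (not_lt.mpr h)

lemma testVector_eq_min (hk : 0 < k) (i : Fin (2 * k)) :
    testVector k i = min ((((i : ℕ) : ℝ) + 1) / k) 1 := by
  have hk' : (0 : ℝ) < k := by exact_mod_cast hk
  unfold testVector
  split_ifs with h
  · rw [min_eq_left ((div_le_one hk').mpr (by exact_mod_cast h))]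
  · rw [min_eq_right ((one_le_div hk').mpr (by exact_mod_cast (not_lt.mp h).trans (Nat.le_succ _)))]

lemma abs_testVector_sub_le (hk : 0 < k) (i j : Fin (2 * k)) :
    |testVector k i - testVector k j| ≤ |((i : ℕ) : ℝ) - j| / k := by
  rw [testVector_eq_min hk, testVector_eq_min hk]
  refine (abs_min_sub_min_le_max _ _ _ _).trans ?_
  rw [sub_self, abs_zero, ← sub_div, add_sub_add_right_eq_sub, abs_div, Nat.abs_cast]
  exact max_le le_rfl (by positivity)

lemma sq_abs_testVector_sub_le {i j : Fin (2 * k)} (h : IsPathEdge k i j) :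
    |testVector k i - testVector k j| ^ 2 ≤ 1 / (k : ℝ) ^ 2 := by
  have hk : 0 < k := by unfold IsPathEdge at h; omega
  have hdist : |((i : ℕ) : ℝ) - j| = 1 := by
    unfold IsPathEdge at h
    rcases h with ⟨h, -⟩ | ⟨h, -⟩ <;> simp [← h]
  calc _ ≤ (|((i : ℕ) : ℝ) - j| / k) ^ 2 :=
        pow_le_pow_left₀ (abs_nonneg _) (abs_testVector_sub_le hk i j) 2
    _ = 1 / (k : ℝ) ^ 2 := by rw [hdist, div_pow, one_pow]

lemma energy_G_le {G0 : Fin (2 * k) → Fin (2 * k) → ℝ}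
    (hsupp : ∀ i j, G0 i j ≠ 0 → k ≤ (i : ℕ) ∧ k ≤ (j : ℕ)) :
    ∑ i, ∑ j, G k G0 i j * |testVector k i - testVector k j| ^ 2 ≤ 4 / k := by
  have hterm : ∀ i j, G k G0 i j * |testVector k i - testVector k j| ^ 2 ≤
      (if IsPathEdge k i j then 1 else 0) / (k : ℝ) ^ 2 := by
    intro i j
    have hblock : G0 i j * |testVector k i - testVector k j| ^ 2 = 0 := by
      by_cases h0 : G0 i j = 0
      · rw [h0, zero_mul]
      · obtain ⟨hi, hj⟩ := hsupp i j h0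
        simp [testVector_of_le hi, testVector_of_le hj]
    rw [G, add_mul, hblock, add_zero]
    by_cases h : IsPathEdge k i j
    · rw [if_pos h, one_mul]
      exact sq_abs_testVector_sub_le h
    · simp [h]
  calc _ ≤ ∑ i, ∑ j, (if IsPathEdge k i j then (1 : ℝ) else 0) / (k : ℝ) ^ 2 :=
        sum_le_sum fun i _ => sum_le_sum fun j _ => hterm i j
    _ = (∑ i, ∑ j, (if IsPathEdge k i j then (1 : ℝ) else 0)) / (k : ℝ) ^ 2 := by
        simp only [sum_div]
    _ ≤ 4 * k / (k : ℝ) ^ 2 := by gcongr; exact sum_sum_pathEdge_le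
    _ = 4 / k := by
        rcases eq_or_ne (k : ℝ) 0 with hk | hk
        · simp [hk]
        · field_simp

lemma G_nonneg {G0 : Fin (2 * k) → Fin (2 * k) → ℝ} (hG0 : ∀ i j, 0 ≤ G0 i j) (i j : Fin (2 * k)) :
    0 ≤ G k G0 i j :=
  add_nonneg (by positivity) (hG0 i j)

lemma total_G_le {G0 : Fin (2 * k) → Fin (2 * k) → ℝ} {D : ℝ} (hdeg : ∀ i, ∑ j, G0 i j ≤ D) :
    ∑ i, ∑ j, G k G0 i j ≤ (2 * D + 4) * k := by
  have hG0 : ∑ i, ∑ j, G0 i j ≤ 2 * k * D := by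
    simpa using sum_le_card_nsmul univ _ D fun i _ => hdeg i
  simp only [G, sum_add_distrib]
  linarith [sum_sum_pathEdge_le (k := k)]

lemma le_total_G {G0 : Fin (2 * k) → Fin (2 * k) → ℝ} (hG0 : ∀ i j, 0 ≤ G0 i j) :
    (k : ℝ) ≤ ∑ i, ∑ j, G k G0 i j := by
  have hrow : ∀ i : Fin (2 * k), (i : ℕ) < k → 1 ≤ ∑ j, G k G0 i j := by
    intro i hi
    have hedge : IsPathEdge k i ⟨i + 1, by omega⟩ := Or.inl ⟨rfl, hi⟩
    calc (1 : ℝ) ≤ G k G0 i ⟨i + 1, by omega⟩ := by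
          rw [G, if_pos hedge]; linarith [hG0 i ⟨i + 1, by omega⟩]
      _ ≤ _ := single_le_sum (fun j _ => G_nonneg hG0 i j) (mem_univ _)
  calc (k : ℝ) = ∑ i : Fin (2 * k), if (i : ℕ) < k then 1 else 0 := by
        rw [sum_boole, Fin.card_filter_val_lt, min_eq_right (by omega)]
    _ ≤ _ := sum_le_sum fun i _ => by
        split_ifs with hi
        · exact hrow i hi
        · exact sum_nonneg fun j _ => G_nonneg hG0 i j

lemma H_nonneg (i j : Fin (2 * k)) : 0 ≤ H k i j := by
  unfold H; split_ifs <;> norm_num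

lemma H_le_one (i j : Fin (2 * k)) : H k i j ≤ 1 := by
  unfold H; split_ifs <;> norm_num

lemma sub_one_le_sum_H {i : Fin (2 * k)} (hi : k ≤ (i : ℕ)) : (k : ℝ) - 1 ≤ ∑ j, H k i j := by
  have hcard : #(({j | k ≤ (j : ℕ)} : Finset (Fin (2 * k))).erase i) = k - 1 := by
    rw [card_erase_of_mem (by simp [hi]), Fin.card_filter_le_val, two_mul, Nat.add_sub_cancel]
  calc (k : ℝ) - 1 = #(({j | k ≤ (j : ℕ)} : Finset (Fin (2 * k))).erase i) := by
        rw [hcard, Nat.cast_sub (by omega), Nat.cast_one]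
    _ ≤ #({j | i ≠ j ∧ ((i : ℕ) = 0 ∨ k ≤ (i : ℕ)) ∧ ((j : ℕ) = 0 ∨ k ≤ (j : ℕ))} :
          Finset (Fin (2 * k))) := by
        gcongr
        intro j hj
        simp only [mem_erase, mem_filter, mem_univ, true_and] at hj ⊢
        exact ⟨Ne.symm hj.1, Or.inr hi, Or.inr hj.2⟩
    _ = ∑ j, H k i j := by simp only [H, sum_boole]

lemma half_mul_sq_le_total_H (hk : 2 ≤ k) : 1 / 2 * (k : ℝ) ^ 2 ≤ ∑ i, ∑ j, H k i j := by
  have hk' : (2 : ℝ) ≤ k := by exact_mod_cast hk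
  calc 1 / 2 * (k : ℝ) ^ 2 ≤ k * ((k : ℝ) - 1) := by nlinarith
    _ = ∑ i : Fin (2 * k), if k ≤ (i : ℕ) then (k : ℝ) - 1 else 0 := by
        rw [sum_ite, sum_const_zero, add_zero, sum_const, Fin.card_filter_le_val, two_mul,
          Nat.add_sub_cancel, nsmul_eq_mul]
    _ ≤ _ := sum_le_sum fun i _ => by
        split_ifs with hi
        · exact sub_one_le_sum_H hi
        · exact sum_nonneg fun j _ => H_nonneg i j

lemma total_H_le : ∑ i, ∑ j, H k i j ≤ 4 * (k : ℝ) ^ 2 := by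
  calc _ ≤ ∑ _i : Fin (2 * k), ∑ _j : Fin (2 * k), (1 : ℝ) :=
        sum_le_sum fun i _ => sum_le_sum fun j _ => H_le_one i j
    _ = 4 * (k : ℝ) ^ 2 := by simp; ring

lemma quarter_mul_le_energy_H (hk : 2 ≤ k) :
    1 / 4 * (k : ℝ) ≤ ∑ i, ∑ j, H k i j * |testVector k i - testVector k j| ^ 2 := by
  have hk' : (2 : ℝ) ≤ k := by exact_mod_cast hk
  let i₀ : Fin (2 * k) := ⟨0, by omega⟩
  have hx₀ : testVector k i₀ = 1 / k := by simp [testVector, i₀, show 0 < k by omega]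
  have hterm : ∀ j : Fin (2 * k), k ≤ (j : ℕ) →
      1 / 4 ≤ H k i₀ j * |testVector k i₀ - testVector k j| ^ 2 := by
    intro j hj
    have hH : H k i₀ j = 1 := if_pos ⟨fun h => by simp [i₀, Fin.ext_iff] at h; omega,
      Or.inl rfl, Or.inr hj⟩
    have hinv : 1 / (k : ℝ) ≤ 1 / 2 := one_div_le_one_div_of_le two_pos hk'
    rw [hH, one_mul, hx₀, testVector_of_le hj, abs_sub_comm,
      abs_of_nonneg (by linarith [one_div_pos.mpr (two_pos.trans_le hk')])]
    nlinarith
  have hrow : ∀ i j : Fin (2 * k), 0 ≤ H k i j * |testVector k i - testVector k j| ^ 2 :=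
    fun i j => mul_nonneg (H_nonneg i j) (sq_nonneg _)
  calc 1 / 4 * (k : ℝ) = ∑ j : Fin (2 * k), if k ≤ (j : ℕ) then 1 / 4 else 0 := by
        rw [sum_ite, sum_const_zero, add_zero, sum_const, Fin.card_filter_le_val, two_mul,
          Nat.add_sub_cancel, nsmul_eq_mul]
        ring
    _ ≤ ∑ j, H k i₀ j * |testVector k i₀ - testVector k j| ^ 2 := sum_le_sum fun j _ => by
        split_ifs with hj
        · exact hterm j hj
        · exact hrow i₀ j
    _ ≤ _ := single_le_sum (f := fun i => ∑ j, H k i j * |testVector k i - testVector k j| ^ 2)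
        (fun i _ => sum_nonneg fun j _ => hrow i j) (mem_univ i₀)

lemma spectral_ratio_le {G0 : Fin (2 * k) → Fin (2 * k) → ℝ} (hk : 2 ≤ k)
    (hG0 : ∀ i j, 0 ≤ G0 i j) (hsupp : ∀ i j, G0 i j ≠ 0 → k ≤ (i : ℕ) ∧ k ≤ (j : ℕ)) :
    (∑ i, ∑ j, G k G0 i j / (∑ a, ∑ b, G k G0 a b) * (testVector k i - testVector k j) ^ 2) /
      (∑ i, ∑ j, H k i j / (∑ a, ∑ b, H k a b) * (testVector k i - testVector k j) ^ 2) ≤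
      64 / k := by
  have hkpos : (0 : ℝ) < k := by positivity
  rw [sum_sum_div_mul_sq, sum_sum_div_mul_sq]
  calc _ ≤ (4 : ℝ) / k / k / (1 / 4 * k / (4 * k ^ 2)) :=
        div_div_div_le_of_bounds (sum_nonneg fun i _ => sum_nonneg fun j _ =>
          mul_nonneg (G_nonneg hG0 i j) (sq_nonneg _)) (energy_G_le hsupp) hkpos (le_total_G hG0)
          (by positivity) (quarter_mul_le_energy_H hk)
          (by linarith [half_mul_sq_le_total_H hk, pow_pos hkpos 2]) total_H_le
    _ = 64 / k := by field_simp; ring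

end Lollipop

/-- The lollipop instance: `G` is a weight-1 path on `v_1, …, v_{k+1}` (0-based indices
`0, …, k` of `Fin (2k)`) together with an arbitrary graph `G0` of maximum degree at most `D`
(with at least one edge) on `{v_{k+1}, …, v_{2k}}` (indices `≥ k`), and `H` is the complete
graph on the `k+1` vertices `{v_1, v_{k+1}, …, v_{2k}}` (index `0` and indices `≥ k`). The
test vector `x_{v_i} = i/k` for `i ≤ k` and `x_{v_i} = 1` for `i > k` witnesses that the
spectral relaxation value is `O(1/k)`, with constants depending only on `D`. -/
theorem lollipop_spectral_gap (D : ℕ) :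
    ∃ C₁ c₂ C₃ c₄ C : ℝ, 0 < C₁ ∧ 0 < c₂ ∧ 0 < C₃ ∧ 0 < c₄ ∧ 0 < C ∧
    ∀ (k : ℕ), 1 ≤ k → ∀ G0 : Fin (2 * k) → Fin (2 * k) → ℝ,
      (∀ i j, G0 i j = G0 j i) →
      (∀ i j, G0 i j = 0 ∨ G0 i j = 1) →
      (∀ i, G0 i i = 0) →
      (∀ i j, G0 i j ≠ 0 → k ≤ i.val ∧ k ≤ j.val) →
      (∀ i, ∑ j, G0 i j ≤ (D : ℝ)) →
      (∃ i j, G0 i j = 1) →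
      letI G : Fin (2 * k) → Fin (2 * k) → ℝ := fun i j =>
        (if (i.val + 1 = j.val ∧ i.val < k) ∨ (j.val + 1 = i.val ∧ j.val < k)
          then (1 : ℝ) else 0) + G0 i j
      letI H : Fin (2 * k) → Fin (2 * k) → ℝ := fun i j =>
        if i ≠ j ∧ (i.val = 0 ∨ k ≤ i.val) ∧ (j.val = 0 ∨ k ≤ j.val) then (1 : ℝ) else 0
      letI x : Fin (2 * k) → ℝ := fun i => if i.val < k then ((i.val : ℝ) + 1) / k else 1
      (∑ i, ∑ j, G i j * |x i - x j| ^ 2 ≤ C₁ / k) ∧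
      (c₂ * k ≤ ∑ i, ∑ j, H i j * |x i - x j| ^ 2) ∧
      ((∑ i, ∑ j, G i j) ≤ C₃ * k) ∧
      (c₄ * (k : ℝ) ^ 2 ≤ ∑ i, ∑ j, H i j) ∧
      ((∑ i, ∑ j, (G i j / (∑ a, ∑ b, G a b)) * (x i - x j) ^ 2) /
          (∑ i, ∑ j, (H i j / (∑ a, ∑ b, H a b)) * (x i - x j) ^ 2) ≤ C / k) := by
  refine ⟨4, 1 / 4, 2 * D + 4, 1 / 2, 64, by norm_num, by norm_num, by positivity, by norm_num,
    by norm_num, fun k _ G0 _ h01 hdiag hsupp hdeg hedge => ?_⟩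
  have hk : 2 ≤ k := Lollipop.two_le_of_edge hdiag hsupp hedge
  have hG0 : ∀ i j, 0 ≤ G0 i j := fun i j => by rcases h01 i j with h | h <;> simp [h]
  exact ⟨Lollipop.energy_G_le hsupp, Lollipop.quarter_mul_le_energy_H hk,
    Lollipop.total_G_le hdeg, Lollipop.half_mul_sq_le_total_H hk,
    Lollipop.spectral_ratio_le hk hG0 hsupp⟩
end
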